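/- arXiv:1704.04833 — 8 statements merged into one kernel-verified Lean document; each statement's English description precedes it below -/
import Mathlib

section
/- Let K = [[P, Q],[Qᵀ, R]] be a symmetric positive semidefinite block matrix. Then for all vectors u, v of appropriate dimensions, (uᵀ, vᵀ) K (u; v) ≥ max( uᵀ(P − Q R⁺ Qᵀ)u, vᵀ(R − Qᵀ P⁺ Q)v ), where M⁺ denotes the Moore–Penrose pseudoinverse. -/
/-!
Put `w = R⁺ Qᵀ u`. As soon as `R R⁺ Qᵀ = Qᵀ`, completing the square gives
`(u, v)ᵀ K (u, v) = uᵀ (P - Q R⁺ Qᵀ) u + (v + w)ᵀ R (v + w)`, and the last term is nonnegative.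
The range condition holds because `K ⪰ 0` forces `ker R ⊆ ker Q`: if `R x = 0` then `(0, x)`
is isotropic for `K`, hence lies in `ker K`, and so `Q x = 0`. The bound with `P⁺` is the same
statement for the block-swapped matrix `[[R, Qᵀ], [Q, P]]`.
-/

open Matrix

/-- `Mplus` is the Moore–Penrose pseudoinverse of `M`. -/
def IsMoorePenrose {a b : Type*} [Fintype a] [Fintype b]
    (M : Matrix a b ℝ) (Mplus : Matrix b a ℝ) : Prop :=
  M * Mplus * M = M ∧ Mplus * M * Mplus = Mplus ∧
    (M * Mplus)ᵀ = M * Mplus ∧ (Mplus * M)ᵀ = Mplus * M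

open scoped ComplexOrder

namespace IsMoorePenrose

variable {m n : Type*} [Fintype m] [Fintype n] {M : Matrix m n ℝ} {Mplus : Matrix n m ℝ}

theorem transpose_mul_mul_pinv (h : IsMoorePenrose M Mplus) : Mᵀ * (M * Mplus) = Mᵀ := by
  conv_lhs => rw [← h.2.2.1, ← transpose_mul, h.1]

end IsMoorePenrose

namespace Matrix

variable {l m n : Type*}

theorem mul_eq_self_of_mulVec_eq_zero {α : Type*} [Ring α] [Fintype n] {B : Matrix l n α}
    {D : Matrix m n α} {X : Matrix n n α} (hker : ∀ x, D *ᵥ x = 0 → B *ᵥ x = 0)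
    (hX : D * X = D) : B * X = B := by
  refine ext_iff_mulVec.2 fun y => ?_
  have hD : D *ᵥ (X *ᵥ y - y) = 0 := by
    rw [mulVec_sub, mulVec_mulVec, hX, sub_self]
  rw [← mulVec_mulVec, ← sub_eq_zero, ← mulVec_sub]
  exact hker _ hD

theorem dotProduct_fromBlocks_mulVec_completeSquare {α : Type*} [CommRing α] [Fintype m]
    [Fintype n] {A : Matrix m m α} {B : Matrix m n α} {D : Matrix n n α} (hD : Dᵀ = D)
    {u : m → α} {v w : n → α} (hw : D *ᵥ w = Bᵀ *ᵥ u) :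
    Sum.elim u v ⬝ᵥ fromBlocks A B Bᵀ D *ᵥ Sum.elim u v =
      u ⬝ᵥ A *ᵥ u - w ⬝ᵥ Bᵀ *ᵥ u + (v + w) ⬝ᵥ D *ᵥ (v + w) := by
  have hB : u ⬝ᵥ B *ᵥ v = v ⬝ᵥ Bᵀ *ᵥ u := by
    rw [dotProduct_mulVec, ← mulVec_transpose, dotProduct_comm]
  have hDw : ∀ x, w ⬝ᵥ D *ᵥ x = x ⬝ᵥ Bᵀ *ᵥ u := fun x => by
    rw [dotProduct_mulVec, ← hD, vecMul_transpose, hw, dotProduct_comm]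
  simp only [fromBlocks_mulVec, Sum.elim_comp_inl, Sum.elim_comp_inr, sumElim_dotProduct_sumElim,
    mulVec_add, dotProduct_add, add_dotProduct, hB, hDw, hw]
  ring

theorem sumElim_dotProduct_fromBlocks_mulVec_sumElim_comm {α : Type*}
    [NonUnitalNonAssocSemiring α] [Fintype m] [Fintype n] (A : Matrix m m α) (B : Matrix m n α)
    (C : Matrix n m α) (D : Matrix n n α) (u : m → α) (v : n → α) :
    Sum.elim v u ⬝ᵥ fromBlocks D C B A *ᵥ Sum.elim v u =
      Sum.elim u v ⬝ᵥ fromBlocks A B C D *ᵥ Sum.elim u v := by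
  simp only [fromBlocks_mulVec, Sum.elim_comp_inl, Sum.elim_comp_inr, sumElim_dotProduct_sumElim,
    dotProduct_add]
  abel

theorem PosSemidef.fromBlocks_swap {𝕜 : Type*} [RCLike 𝕜] {A : Matrix m m 𝕜} {B : Matrix m n 𝕜}
    {C : Matrix n m 𝕜} {D : Matrix n n 𝕜} (hK : (fromBlocks A B C D).PosSemidef) :
    (fromBlocks D C B A).PosSemidef := by
  rw [← fromBlocks_submatrix_sum_swap_sum_swap]
  exact hK.submatrix _

theorem PosSemidef.fromBlocks₁₂_mulVec_eq_zero {𝕜 : Type*} [RCLike 𝕜] [Fintype m] [Fintype n]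
    {A : Matrix m m 𝕜} {B : Matrix m n 𝕜} {C : Matrix n m 𝕜} {D : Matrix n n 𝕜}
    (hK : (fromBlocks A B C D).PosSemidef) {x : n → 𝕜} (hx : D *ᵥ x = 0) : B *ᵥ x = 0 := by
  have hKx : fromBlocks A B C D *ᵥ Sum.elim 0 x = 0 :=
    (hK.dotProduct_mulVec_zero_iff _).1
      (by simp [fromBlocks_mulVec, hx, dotProduct, Fintype.sum_sum_type])
  funext i
  simpa [fromBlocks_mulVec] using congrFun hKx (Sum.inl i)

section Real

variable [Fintype m] [Fintype n]

theorem PosSemidef.fromBlocks₁₂_mul_mul_pinv {A : Matrix m m ℝ} {B : Matrix m n ℝ}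
    {C : Matrix n m ℝ} {D Dplus : Matrix n n ℝ} (hK : (fromBlocks A B C D).PosSemidef)
    (hD : IsMoorePenrose D Dplus) : B * (D * Dplus) = B := by
  have hDsymm : Dᵀ = D := (hK.submatrix Sum.inr).1
  refine mul_eq_self_of_mulVec_eq_zero (fun _ => hK.fromBlocks₁₂_mulVec_eq_zero) ?_
  simpa only [hDsymm] using hD.transpose_mul_mul_pinv

theorem PosSemidef.schur_dotProduct_mulVec_le {A : Matrix m m ℝ} {B : Matrix m n ℝ}
    {D Dplus : Matrix n n ℝ} (hK : (fromBlocks A B Bᵀ D).PosSemidef)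
    (hD : IsMoorePenrose D Dplus) (u : m → ℝ) (v : n → ℝ) :
    u ⬝ᵥ (A - B * Dplus * Bᵀ) *ᵥ u ≤ Sum.elim u v ⬝ᵥ fromBlocks A B Bᵀ D *ᵥ Sum.elim u v := by
  have hDpsd : D.PosSemidef := hK.submatrix Sum.inr
  have hDsymm : Dᵀ = D := hDpsd.1
  set w := Dplus *ᵥ Bᵀ *ᵥ u
  have hw : D *ᵥ w = Bᵀ *ᵥ u := by
    have hrange := congrArg Matrix.transpose (hK.fromBlocks₁₂_mul_mul_pinv hD)
    rw [transpose_mul, hD.2.2.1] at hrange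
    rw [mulVec_mulVec, mulVec_mulVec, hrange]
  have hschur : u ⬝ᵥ (A - B * Dplus * Bᵀ) *ᵥ u = u ⬝ᵥ A *ᵥ u - w ⬝ᵥ Bᵀ *ᵥ u := by
    have hBw : u ⬝ᵥ B *ᵥ w = w ⬝ᵥ Bᵀ *ᵥ u := by
      rw [dotProduct_mulVec, ← mulVec_transpose, dotProduct_comm]
    rw [sub_mulVec, dotProduct_sub, Matrix.mul_assoc, ← mulVec_mulVec, ← mulVec_mulVec, ← hBw]
  have hsq := hDpsd.dotProduct_mulVec_nonneg (v + w)
  rw [star_trivial] at hsq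
  rw [dotProduct_fromBlocks_mulVec_completeSquare hDsymm hw, hschur]
  linarith

end Real

end Matrix

/-- Quadratic-form lower bound via Schur complements, for a PSD block matrix
`K = [[P, Q],[Qᵀ, R]]`. -/
theorem schur_quadform_lower_bound {a b : ℕ}
    (P : Matrix (Fin a) (Fin a) ℝ) (Q : Matrix (Fin a) (Fin b) ℝ)
    (R : Matrix (Fin b) (Fin b) ℝ)
    (Pplus : Matrix (Fin a) (Fin a) ℝ) (Rplus : Matrix (Fin b) (Fin b) ℝ)
    (hK : (Matrix.fromBlocks P Q Qᵀ R).PosSemidef)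
    (hP : IsMoorePenrose P Pplus) (hR : IsMoorePenrose R Rplus)
    (u : Fin a → ℝ) (v : Fin b → ℝ) :
    max (u ⬝ᵥ (P - Q * Rplus * Qᵀ).mulVec u) (v ⬝ᵥ (R - Qᵀ * Pplus * Q).mulVec v) ≤
      (Sum.elim u v) ⬝ᵥ (Matrix.fromBlocks P Q Qᵀ R).mulVec (Sum.elim u v) := by
  refine max_le (hK.schur_dotProduct_mulVec_le hR u v) ?_
  have hK' : (fromBlocks R Qᵀ Qᵀᵀ P).PosSemidef := by
    rw [transpose_transpose]
    exact hK.fromBlocks_swap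
  have h := hK'.schur_dotProduct_mulVec_le hP v u
  rwa [transpose_transpose, sumElim_dotProduct_fromBlocks_mulVec_sumElim_comm] at h
end

section
/- Let D ∈ ℝ^{m×p} have compact SVD D = U Λ Vᵀ with Λ ∈ ℝ^{r×r} invertible, and let Ṽ ∈ ℝ^{p×(p−r)} be such that (V, Ṽ) is orthogonal. Let X Ṽ/√n have compact SVD U₁ Λ₁ V₁ᵀ, and extend V₁ to an orthogonal matrix (V₁, Ṽ₁). Let 𝓛 = (ker(X) ∩ ker(D))^⊥. Then β ∈ 𝓛 if and only if β = V δ + Ṽ V₁ ξ where δ = Vᵀβ and ξ = V₁ᵀ Ṽᵀ β. Equivalently, Im(Ṽ Ṽ₁) = ker(X) ∩ ker(D). -/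
open Matrix

/-- Representation of `𝓛 = (ker X ∩ ker D)^⊥` via the compact SVDs
`D = U Λ Vᵀ` and `X Ṽ/√n = U₁ Λ₁ V₁ᵀ`:  `β ∈ 𝓛` iff `β = V δ + Ṽ V₁ ξ` with
`δ = Vᵀ β`, `ξ = V₁ᵀ Ṽᵀ β`; equivalently `Im(Ṽ Ṽ₁) = ker X ∩ ker D`. -/
theorem mem_L_iff_repr {n m p r k r' k' : ℕ}
    (X : Matrix (Fin n) (Fin p) ℝ) (D : Matrix (Fin m) (Fin p) ℝ)
    (U : Matrix (Fin m) (Fin r) ℝ) (Λ : Matrix (Fin r) (Fin r) ℝ)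
    (V : Matrix (Fin p) (Fin r) ℝ) (Vt : Matrix (Fin p) (Fin k) ℝ)
    (U₁ : Matrix (Fin n) (Fin r') ℝ) (Λ₁ : Matrix (Fin r') (Fin r') ℝ)
    (V₁ : Matrix (Fin k) (Fin r') ℝ) (Vt₁ : Matrix (Fin k) (Fin k') ℝ)
    (hD : D = U * Λ * Vᵀ) (hU : Uᵀ * U = 1) (hΛ : Λ.PosDef)
    (hV : Vᵀ * V = 1) (hVt : Vtᵀ * Vt = 1) (hVVt : Vᵀ * Vt = 0)
    (hVfull : V * Vᵀ + Vt * Vtᵀ = 1)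
    (hX : X * Vt = Real.sqrt n • (U₁ * Λ₁ * V₁ᵀ))
    (hU₁ : U₁ᵀ * U₁ = 1) (hΛ₁ : Λ₁.PosDef)
    (hV₁ : V₁ᵀ * V₁ = 1) (hVt₁ : Vt₁ᵀ * Vt₁ = 1) (hV₁Vt₁ : V₁ᵀ * Vt₁ = 0)
    (hV₁full : V₁ * V₁ᵀ + Vt₁ * Vt₁ᵀ = 1) :
    (∀ β : Fin p → ℝ,
      (∀ w : Fin p → ℝ, X.mulVec w = 0 → D.mulVec w = 0 → β ⬝ᵥ w = 0) ↔
        β = V.mulVec (Vᵀ.mulVec β) + (Vt * V₁).mulVec ((Vt * V₁)ᵀ.mulVec β)) ∧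
    (∀ ζ : Fin p → ℝ,
      (∃ w : Fin k' → ℝ, ζ = (Vt * Vt₁).mulVec w) ↔
        (X.mulVec ζ = 0 ∧ D.mulVec ζ = 0)) := by
  -- dot product of images lemma
  have dp : ∀ {a b : ℕ} (A : Matrix (Fin p) (Fin a) ℝ) (B : Matrix (Fin p) (Fin b) ℝ)
      (x : Fin a → ℝ) (y : Fin b → ℝ),
      A.mulVec x ⬝ᵥ B.mulVec y = x ⬝ᵥ ((Aᵀ * B).mulVec y) := by
    intro a b A B x y
    rw [← Matrix.mulVec_mulVec, Matrix.dotProduct_mulVec x Aᵀ,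
      Matrix.vecMul_transpose]
  -- key orthogonality products
  have e1 : Vᵀ * (Vt * Vt₁) = 0 := by
    rw [← Matrix.mul_assoc, hVVt, Matrix.zero_mul]
  have e2 : (Vt * V₁)ᵀ * (Vt * Vt₁) = 0 := by
    rw [Matrix.transpose_mul, Matrix.mul_assoc V₁ᵀ Vtᵀ (Vt * Vt₁),
      ← Matrix.mul_assoc Vtᵀ Vt Vt₁, hVt, Matrix.one_mul, hV₁Vt₁]
  have e3 : (Vt * Vt₁)ᵀ * (Vt * Vt₁) = 1 := by
    rw [Matrix.transpose_mul, Matrix.mul_assoc Vt₁ᵀ Vtᵀ (Vt * Vt₁),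
      ← Matrix.mul_assoc Vtᵀ Vt Vt₁, hVt, Matrix.one_mul, hVt₁]
  -- kernel of D
  have hDker : ∀ w : Fin p → ℝ, D.mulVec w = 0 ↔ Vᵀ.mulVec w = 0 := by
    intro w
    constructor
    · intro h
      have h1 : (Λ⁻¹ * (Uᵀ * D)).mulVec w = 0 := by
        rw [← Matrix.mulVec_mulVec, ← Matrix.mulVec_mulVec, h]
        simp
      have hΛu : IsUnit Λ.det := isUnit_iff_ne_zero.mpr hΛ.det_pos.ne'
      have heq : Λ⁻¹ * (Uᵀ * D) = Vᵀ := by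
        rw [hD, Matrix.mul_assoc U Λ Vᵀ, ← Matrix.mul_assoc Uᵀ U (Λ * Vᵀ), hU,
          Matrix.one_mul, ← Matrix.mul_assoc, Matrix.nonsing_inv_mul Λ hΛu,
          Matrix.one_mul]
      rwa [heq] at h1
    · intro h
      rw [hD, Matrix.mul_assoc U Λ Vᵀ, ← Matrix.mulVec_mulVec, ← Matrix.mulVec_mulVec,
        h, Matrix.mulVec_zero, Matrix.mulVec_zero]
  -- kernel of X restricted to image of Vt
  have hXker : ∀ u : Fin k → ℝ, X.mulVec (Vt.mulVec u) = 0 ↔ V₁ᵀ.mulVec u = 0 := by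
    intro u
    rw [Matrix.mulVec_mulVec, hX]
    constructor
    · intro h
      rcases Nat.eq_zero_or_pos n with hn | hn
      · subst hn
        have h10 : (1 : Matrix (Fin r') (Fin r') ℝ) = 0 := by
          rw [← hU₁]; ext i j; simp [Matrix.mul_apply]
        calc V₁ᵀ.mulVec u = (1 : Matrix (Fin r') (Fin r') ℝ).mulVec (V₁ᵀ.mulVec u) := by
              rw [Matrix.one_mulVec]
          _ = 0 := by rw [h10, Matrix.zero_mulVec]
      · have hs : (Real.sqrt n : ℝ) ≠ 0 := by positivity
        have h0 : (U₁ * Λ₁ * V₁ᵀ).mulVec u = 0 := by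
          rw [Matrix.smul_mulVec] at h
          exact (smul_eq_zero.mp h).resolve_left hs
        have h1 : (Λ₁⁻¹ * (U₁ᵀ * (U₁ * Λ₁ * V₁ᵀ))).mulVec u = 0 := by
          rw [← Matrix.mulVec_mulVec, ← Matrix.mulVec_mulVec, h0]
          simp
        have hΛ₁u : IsUnit Λ₁.det := isUnit_iff_ne_zero.mpr hΛ₁.det_pos.ne'
        have heq : Λ₁⁻¹ * (U₁ᵀ * (U₁ * Λ₁ * V₁ᵀ)) = V₁ᵀ := by
          rw [Matrix.mul_assoc U₁ Λ₁ V₁ᵀ, ← Matrix.mul_assoc U₁ᵀ U₁ (Λ₁ * V₁ᵀ), hU₁,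
            Matrix.one_mul, ← Matrix.mul_assoc, Matrix.nonsing_inv_mul Λ₁ hΛ₁u,
            Matrix.one_mul]
        rwa [heq] at h1
    · intro h
      rw [Matrix.smul_mulVec, Matrix.mul_assoc U₁ Λ₁ V₁ᵀ, ← Matrix.mulVec_mulVec,
        ← Matrix.mulVec_mulVec, h, Matrix.mulVec_zero, Matrix.mulVec_zero, smul_zero]
  -- decomposition: w with Vᵀ w = 0 equals Vt (Vtᵀ w)
  have hdecomp : ∀ w : Fin p → ℝ, Vᵀ.mulVec w = 0 → w = Vt.mulVec (Vtᵀ.mulVec w) := by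
    intro w hw
    have h := congrArg (fun M => Matrix.mulVec M w) hVfull
    simp only [Matrix.add_mulVec, Matrix.one_mulVec, ← Matrix.mulVec_mulVec] at h
    rw [hw, Matrix.mulVec_zero, zero_add] at h
    exact h.symm
  -- Part 2
  have part2 : ∀ ζ : Fin p → ℝ,
      (∃ w : Fin k' → ℝ, ζ = (Vt * Vt₁).mulVec w) ↔
        (X.mulVec ζ = 0 ∧ D.mulVec ζ = 0) := by
    intro ζ
    constructor
    · rintro ⟨w, rfl⟩
      constructor
      · have : (Vt * Vt₁).mulVec w = Vt.mulVec (Vt₁.mulVec w) := by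
          rw [Matrix.mulVec_mulVec]
        rw [this, (hXker (Vt₁.mulVec w)).mpr]
        rw [Matrix.mulVec_mulVec, hV₁Vt₁, Matrix.zero_mulVec]
      · rw [hDker, Matrix.mulVec_mulVec, e1, Matrix.zero_mulVec]
    · rintro ⟨hXζ, hDζ⟩
      have hVζ : Vᵀ.mulVec ζ = 0 := (hDker ζ).mp hDζ
      have hζ : ζ = Vt.mulVec (Vtᵀ.mulVec ζ) := hdecomp ζ hVζ
      have hV₁u : V₁ᵀ.mulVec (Vtᵀ.mulVec ζ) = 0 :=
        (hXker (Vtᵀ.mulVec ζ)).mp (by rw [← hζ]; exact hXζ)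
      have hufull : Vtᵀ.mulVec ζ = Vt₁.mulVec (Vt₁ᵀ.mulVec (Vtᵀ.mulVec ζ)) := by
        have h := congrArg (fun M => Matrix.mulVec M (Vtᵀ.mulVec ζ)) hV₁full
        simp only [Matrix.add_mulVec, Matrix.one_mulVec, ← Matrix.mulVec_mulVec] at h
        rw [hV₁u, Matrix.mulVec_zero, zero_add] at h
        exact h.symm
      refine ⟨Vt₁ᵀ.mulVec (Vtᵀ.mulVec ζ), ?_⟩
      rw [← Matrix.mulVec_mulVec, ← hufull]
      exact hζ
  refine ⟨?_, part2⟩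
  intro β
  -- full decomposition
  have key : V * Vᵀ + (Vt * V₁) * (Vt * V₁)ᵀ + (Vt * Vt₁) * (Vt * Vt₁)ᵀ = 1 := by
    have h1 : (Vt * V₁) * (Vt * V₁)ᵀ + (Vt * Vt₁) * (Vt * Vt₁)ᵀ = Vt * Vtᵀ := by
      calc (Vt * V₁) * (Vt * V₁)ᵀ + (Vt * Vt₁) * (Vt * Vt₁)ᵀ
          = Vt * (V₁ * V₁ᵀ + Vt₁ * Vt₁ᵀ) * Vtᵀ := by
            simp only [Matrix.transpose_mul, Matrix.mul_add, Matrix.add_mul,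
              Matrix.mul_assoc]
        _ = Vt * Vtᵀ := by rw [hV₁full, Matrix.mul_one]
    rw [add_assoc, h1, hVfull]
  have hβdec : β = V.mulVec (Vᵀ.mulVec β) + (Vt * V₁).mulVec ((Vt * V₁)ᵀ.mulVec β)
      + (Vt * Vt₁).mulVec ((Vt * Vt₁)ᵀ.mulVec β) := by
    have h := congrArg (fun M => Matrix.mulVec M β) key
    simp only [Matrix.add_mulVec, Matrix.one_mulVec, Matrix.transpose_mul,
      ← Matrix.mulVec_mulVec] at h ⊢
    exact h.symm
  constructor
  · intro h
    have hker : X.mulVec ((Vt * Vt₁).mulVec ((Vt * Vt₁)ᵀ.mulVec β)) = 0 ∧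
        D.mulVec ((Vt * Vt₁).mulVec ((Vt * Vt₁)ᵀ.mulVec β)) = 0 :=
      (part2 _).mp ⟨(Vt * Vt₁)ᵀ.mulVec β, rfl⟩
    have hβr : β ⬝ᵥ (Vt * Vt₁).mulVec ((Vt * Vt₁)ᵀ.mulVec β) = 0 := h _ hker.1 hker.2
    have hg1 : V.mulVec (Vᵀ.mulVec β) ⬝ᵥ (Vt * Vt₁).mulVec ((Vt * Vt₁)ᵀ.mulVec β) = 0 := by
      rw [dp, e1, Matrix.zero_mulVec, dotProduct_zero]
    have hg2 : (Vt * V₁).mulVec ((Vt * V₁)ᵀ.mulVec β) ⬝ᵥ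
        (Vt * Vt₁).mulVec ((Vt * Vt₁)ᵀ.mulVec β) = 0 := by
      rw [dp, e2, Matrix.zero_mulVec, dotProduct_zero]
    have hres2 : (Vt * Vt₁).mulVec ((Vt * Vt₁)ᵀ.mulVec β) ⬝ᵥ
        (Vt * Vt₁).mulVec ((Vt * Vt₁)ᵀ.mulVec β)
        = ((Vt * Vt₁)ᵀ.mulVec β) ⬝ᵥ ((Vt * Vt₁)ᵀ.mulVec β) := by
      rw [dp, e3, Matrix.one_mulVec]
    have hsum := congrArg (fun v => v ⬝ᵥ (Vt * Vt₁).mulVec ((Vt * Vt₁)ᵀ.mulVec β)) hβdec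
    simp only [add_dotProduct] at hsum
    have hxx : ((Vt * Vt₁)ᵀ.mulVec β) ⬝ᵥ ((Vt * Vt₁)ᵀ.mulVec β) = 0 := by
      rw [← hres2]; linarith [hsum, hβr, hg1, hg2]
    have hx0 : (Vt * Vt₁)ᵀ.mulVec β = 0 := dotProduct_self_eq_zero.mp hxx
    conv_lhs => rw [hβdec]
    rw [hx0, Matrix.mulVec_zero, add_zero]
  · intro hβ w hXw hDw
    obtain ⟨w', rfl⟩ := (part2 w).mpr ⟨hXw, hDw⟩
    conv_lhs => rw [hβ]
    rw [add_dotProduct, dp, dp, e1, e2, Matrix.zero_mulVec, Matrix.zero_mulVec,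
      dotProduct_zero, dotProduct_zero, add_zero]
end

section
/- Let X ∈ ℝ^{n×p}, D ∈ ℝ^{m×p}, ν > 0, X* := Xᵀ/n, A := ν X*X + DᵀD, and Σ := (I_m − D A⁺ Dᵀ)/ν. Then D A⁺ X* = Σ Σ⁺ (D A⁺ X*) = Σ^{1/2} (Σ⁺)^{1/2} (D A⁺ X*), where M⁺ is the Moore–Penrose pseudoinverse and Σ^{1/2} the PSD square root. -/
/-!
Put `C = D A⁺ Dᵀ`, so that `1 - C = ν Σ`. Since `A⁺ A A⁺ = A⁺` and `ν X* X = A - Dᵀ D`, the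
Gram matrix of `M = D A⁺ X*` is `M Mᵀ = (n ν)⁻¹ D A⁺ (A - Dᵀ D) A⁺ Dᵀ = (n ν)⁻¹ (1 - C) C = Σ C / n`.
So the column space of `M` lies in that of `Σ`, on which `Σ Σ⁺` acts as the identity.

For the square roots: `Σ` and `Σ⁺` are symmetric, so `Σ Σ⁺ = Σ⁺ Σ`, and their PSD square roots,
being continuous functions of them, commute as well. Hence `Σ^{1/2} (Σ⁺)^{1/2}` is a PSD square
root of the orthogonal projection `Σ Σ⁺`, which is its own square root.
-/

open Matrix

section CFC

variable {A : Type*} [Ring A] [StarRing A] [Algebra ℝ A] [TopologicalSpace A]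
  [IsTopologicalRing A] [T2Space A] [PartialOrder A] [StarOrderedRing A]
  [ContinuousFunctionalCalculus ℝ A IsSelfAdjoint] [NonnegSpectrumClass ℝ A]

protected theorem Commute.of_mul_self {s t : A} (hs : 0 ≤ s) (ht : 0 ≤ t)
    (h : Commute (s * s) (t * t)) : Commute s t := by
  have of_sq : ∀ {a : A} (b : A), 0 ≤ a → Commute (a * a) b → Commute a b := fun b ha hab => by
    rw [← CFC.sqrt_mul_self _ ha, CFC.sqrt_eq_cfc]
    exact hab.cfc_nnreal _
  exact of_sq t hs (of_sq (s * s) ht h.symm).symm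

protected theorem Commute.mul_eq_of_isIdempotentElem {s t : A} (hs : 0 ≤ s) (ht : 0 ≤ t)
    (h : Commute s t) (hp : 0 ≤ s * s * (t * t)) (hidem : IsIdempotentElem (s * s * (t * t))) :
    s * t = s * s * (t * t) := by
  rw [← CFC.mul_self_eq_mul_self_iff _ _ (h.mul_nonneg hs ht) hp, hidem.eq, h.mul_mul_mul_comm]

end CFC

namespace IsMoorePenrose

variable {a b : Type*} [Fintype a] [Fintype b] {M : Matrix a b ℝ} {P : Matrix b a ℝ}

theorem unique {Q : Matrix b a ℝ} (hP : IsMoorePenrose M P) (hQ : IsMoorePenrose M Q) :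
    P = Q := by
  obtain ⟨hP₁, hP₂, hP₃, hP₄⟩ := hP
  obtain ⟨hQ₁, hQ₂, hQ₃, hQ₄⟩ := hQ
  have hMP : M * P = M * Q :=
    calc M * P = (M * Q * M * P)ᵀ := by rw [hQ₁, hP₃]
      _ = M * P * (M * Q) := by rw [Matrix.mul_assoc (M * Q), transpose_mul, hP₃, hQ₃]
      _ = M * Q := by rw [← Matrix.mul_assoc, hP₁]
  have hPM : P * M = Q * M :=
    calc P * M = (P * (M * Q * M))ᵀ := by rw [hQ₁, hP₄]
      _ = (P * M * (Q * M))ᵀ := by simp only [Matrix.mul_assoc]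
      _ = Q * M * (P * M) := by rw [transpose_mul, hP₄, hQ₄]
      _ = Q * M := by rw [Matrix.mul_assoc, ← Matrix.mul_assoc M, hP₁]
  calc P = P * M * P := hP₂.symm
    _ = Q * M * Q := by rw [hPM, Matrix.mul_assoc, hMP, ← Matrix.mul_assoc]
    _ = Q := hQ₂

theorem transpose (h : IsMoorePenrose M P) : IsMoorePenrose Mᵀ Pᵀ := by
  obtain ⟨h₁, h₂, h₃, h₄⟩ := h
  refine ⟨?_, ?_, ?_, ?_⟩
  · rw [← transpose_mul, ← transpose_mul, ← Matrix.mul_assoc, h₁]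
  · rw [← transpose_mul, ← transpose_mul, ← Matrix.mul_assoc, h₂]
  · rw [← transpose_mul, transpose_transpose, h₄]
  · rw [← transpose_mul, transpose_transpose, h₃]

theorem transpose_eq_of_transpose_eq {M P : Matrix a a ℝ} (hM : Mᵀ = M)
    (h : IsMoorePenrose M P) : Pᵀ = P :=
  (hM ▸ h.transpose).unique h

/-- The column space of `N` is that of `N * Nᵀ`, hence it lies in that of `M`. -/
theorem mul_mul_eq_of_mul_transpose_eq (h : IsMoorePenrose M P) {c : Type*} [Fintype c]
    {N : Matrix a c ℝ} {K : Matrix b a ℝ} (hN : N * Nᵀ = M * K) : M * P * N = N := by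
  classical
  have h₀ : (1 - M * P) * (N * Nᴴ) = 0 := by
    rw [conjTranspose_eq_transpose_of_trivial, hN, ← Matrix.mul_assoc, Matrix.sub_mul,
      Matrix.one_mul, h.1, sub_self, Matrix.zero_mul]
  rw [mul_self_mul_conjTranspose_eq_zero, Matrix.sub_mul, Matrix.one_mul, sub_eq_zero] at h₀
  exact h₀.symm

open scoped MatrixOrder in
theorem mul_eq_of_mul_self_eq {ι : Type*} [Fintype ι] [DecidableEq ι]
    {M P S T : Matrix ι ι ℝ} (h : IsMoorePenrose M P) (hS : S.PosSemidef) (hSS : S * S = M)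
    (hT : T.PosSemidef) (hTT : T * T = P) : S * T = M * P := by
  have symm_sq : ∀ {R : Matrix ι ι ℝ}, R.PosSemidef → (R * R)ᵀ = R * R := fun hR => by
    rw [transpose_mul, ← conjTranspose_eq_transpose_of_trivial, hR.isHermitian.eq]
  have hcomm : Commute M P := by
    rw [commute_iff_eq, ← h.2.2.1, transpose_mul, ← hSS, ← hTT, symm_sq hS, symm_sq hT]
  have hproj : (M * P).PosSemidef := by
    have := posSemidef_conjTranspose_mul_self (M * P)
    rwa [conjTranspose_eq_transpose_of_trivial, h.2.2.1, ← Matrix.mul_assoc, h.1] at this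
  have hidem : IsIdempotentElem (M * P) := by
    rw [IsIdempotentElem, ← Matrix.mul_assoc, h.1]
  subst hSS hTT
  exact (Commute.of_mul_self hS.nonneg hT.nonneg hcomm).mul_eq_of_isIdempotentElem
    hS.nonneg hT.nonneg hproj.nonneg hidem

end IsMoorePenrose

theorem sandwich_of_pinv_add_gram {m p : Type*} [Fintype m] [Fintype p] [DecidableEq m]
    {G Ap : Matrix p p ℝ} {D : Matrix m p ℝ} (h : Ap * (G + Dᵀ * D) * Ap = Ap) :
    D * Ap * G * Ap * Dᵀ = (1 - D * Ap * Dᵀ) * (D * Ap * Dᵀ) :=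
  calc D * Ap * G * Ap * Dᵀ
      = D * (Ap * (G + Dᵀ * D) * Ap) * Dᵀ - D * Ap * Dᵀ * (D * Ap * Dᵀ) := by
        simp only [Matrix.mul_add, Matrix.add_mul, Matrix.mul_assoc]; abel
    _ = (1 - D * Ap * Dᵀ) * (D * Ap * Dᵀ) := by
        rw [h, Matrix.sub_mul, Matrix.one_mul, Matrix.mul_assoc]

/-- `D A⁺ X* = Σ Σ⁺ (D A⁺ X*) = Σ^{1/2} (Σ⁺)^{1/2} (D A⁺ X*)` where
`A = ν X*X + DᵀD`, `Σ = (I − D A⁺ Dᵀ)/ν`, `X* = Xᵀ/n`. -/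
theorem DAdagXstar_eq_Sigma_proj {n m p : ℕ}
    (X : Matrix (Fin n) (Fin p) ℝ) (D : Matrix (Fin m) (Fin p) ℝ) (ν : ℝ) (hν : 0 < ν)
    (Aplus : Matrix (Fin p) (Fin p) ℝ) (Sigplus SqrtSig SqrtSigplus : Matrix (Fin m) (Fin m) ℝ)
    (Xstar : Matrix (Fin p) (Fin n) ℝ) (hXstar : Xstar = ((n : ℝ))⁻¹ • Xᵀ)
    (A : Matrix (Fin p) (Fin p) ℝ) (hA : A = ν • (Xstar * X) + Dᵀ * D)
    (hAplus : IsMoorePenrose A Aplus)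
    (Sig : Matrix (Fin m) (Fin m) ℝ) (hSig : Sig = ν⁻¹ • ((1 : Matrix (Fin m) (Fin m) ℝ) - D * Aplus * Dᵀ))
    (hSigplus : IsMoorePenrose Sig Sigplus)
    (hSqrt : SqrtSig.PosSemidef ∧ SqrtSig * SqrtSig = Sig)
    (hSqrtPlus : SqrtSigplus.PosSemidef ∧ SqrtSigplus * SqrtSigplus = Sigplus) :
    D * Aplus * Xstar = Sig * Sigplus * (D * Aplus * Xstar) ∧
      D * Aplus * Xstar = SqrtSig * SqrtSigplus * (D * Aplus * Xstar) := by
  have hAplusT : Aplusᵀ = Aplus := hAplus.transpose_eq_of_transpose_eq <| by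
    simp only [hA, hXstar, smul_mul, transpose_add, transpose_smul, transpose_mul,
      transpose_transpose]
  have hνSig : 1 - D * Aplus * Dᵀ = ν • Sig := by
    rw [hSig, smul_smul, mul_inv_cancel₀ hν.ne', one_smul]
  have hsandwich : D * Aplus * (Xstar * X) * Aplus * Dᵀ = Sig * (D * Aplus * Dᵀ) := by
    have := sandwich_of_pinv_add_gram (hA ▸ hAplus.2.1)
    rw [hνSig] at this
    simpa only [Matrix.mul_smul, smul_mul, Algebra.smul_mul_assoc, smul_right_inj hν.ne']
      using this
  have hXstarT : Xstarᵀ = (n : ℝ)⁻¹ • X := by rw [hXstar, transpose_smul, transpose_transpose]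
  have hgram : D * Aplus * Xstar * (D * Aplus * Xstar)ᵀ =
      Sig * ((n : ℝ)⁻¹ • (D * Aplus * Dᵀ)) := by
    rw [Matrix.mul_smul, ← hsandwich, transpose_mul, transpose_mul, hAplusT, hXstarT]
    simp only [Matrix.mul_assoc, smul_mul, Matrix.mul_smul]
  have hproj := hSigplus.mul_mul_eq_of_mul_transpose_eq hgram
  rw [hSigplus.mul_eq_of_mul_self_eq hSqrt.1 hSqrt.2 hSqrtPlus.1 hSqrtPlus.2]
  exact ⟨hproj.symm, hproj.symm⟩
end

section
/- Let D = U Λ Vᵀ be a compact SVD of D ∈ ℝ^{m×p}, ν > 0, A = ν X*X + DᵀD with X* = Xᵀ/n, and B := Λ² + ν Vᵀ X*(I − U₁U₁ᵀ)XV where U₁ comes from the compact SVD of XṼ/√n as above. Then D A⁺ Dᵀ = U Λ B^{-1} Λ Uᵀ, and hence Σ := (I − D A⁺ Dᵀ)/ν = (I − U Λ B^{-1} Λ Uᵀ)/ν. -/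
/-!
Work in the orthonormal basis `(V, Ṽ)` of `ℝ^p` and put `G = √(ν/n) X`, `F = G V`, `H = G Ṽ`.
There `A = GᵀG + V Λ² Vᵀ` becomes the symmetric block matrix `[[Λ² + FᵀF, FᵀH], [HᵀF, HᵀH]]`.
With `(HᵀH)⁺ = H⁺H⁺ᵀ`, the generalized Schur complement of its lower-right block is
`Λ² + Fᵀ(1 - HH⁺)F`, and this is `B` because `H = U₁ (√ν Λ₁) V₁ᵀ` gives `HH⁺ = U₁U₁ᵀ`.
As `B` is positive definite, the block formula produces a Moore–Penrose inverse of `A` with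
top-left block `B⁻¹`; by uniqueness `Vᵀ A⁺ V = B⁻¹`, and `D A⁺ Dᵀ = U Λ (Vᵀ A⁺ V) Λ Uᵀ`.
-/

open Matrix

namespace IsMoorePenrose

variable {m n : Type*} [Fintype m] [Fintype n] {M : Matrix m n ℝ} {N : Matrix n m ℝ}

theorem unique_s8 {N₁ N₂ : Matrix n m ℝ} (h₁ : IsMoorePenrose M N₁) (h₂ : IsMoorePenrose M N₂) :
    N₁ = N₂ := by
  obtain ⟨m₁, r₁, s₁, t₁⟩ := h₁
  obtain ⟨m₂, r₂, s₂, t₂⟩ := h₂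
  have hl : M * N₁ = M * N₂ :=
    calc M * N₁ = (M * N₂)ᵀ * (M * N₁)ᵀ := by rw [s₂, s₁, ← Matrix.mul_assoc, m₂]
    _ = (M * N₁ * M * N₂)ᵀ := by simp only [transpose_mul, Matrix.mul_assoc]
    _ = M * N₂ := by rw [m₁, s₂]
  have hr : N₁ * M = N₂ * M :=
    calc N₁ * M = (N₁ * M)ᵀ * (N₂ * M)ᵀ := by
          rw [t₁, t₂, Matrix.mul_assoc, ← Matrix.mul_assoc M, m₂]
    _ = (N₂ * (M * N₁ * M))ᵀ := by simp only [transpose_mul, Matrix.mul_assoc]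
    _ = N₂ * M := by rw [m₁, t₂]
  calc N₁ = N₂ * M * N₁ := by rw [← hr, r₁]
  _ = N₂ := by rw [Matrix.mul_assoc, hl, ← Matrix.mul_assoc, r₂]

theorem transpose_mul_mul (h : IsMoorePenrose M N) : Mᵀ * (M * N) = Mᵀ := by
  rw [← h.2.2.1, ← transpose_mul, h.1]

theorem mul_transpose_mul_transpose (h : IsMoorePenrose M N) : N * (Nᵀ * Mᵀ) = N := by
  rw [← transpose_mul, h.2.2.1, ← Matrix.mul_assoc, h.2.1]

theorem transpose_mul_self_mul (h : IsMoorePenrose M N) : Mᵀ * M * (N * Nᵀ) = N * M := by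
  rw [Matrix.mul_assoc, ← Matrix.mul_assoc M, ← Matrix.mul_assoc, h.transpose_mul_mul,
    ← transpose_mul, h.2.2.2]

theorem transpose_mul_self (h : IsMoorePenrose M N) : IsMoorePenrose (Mᵀ * M) (N * Nᵀ) := by
  have hr : N * Nᵀ * (Mᵀ * M) = N * M := by
    rw [← Matrix.mul_assoc, Matrix.mul_assoc N, h.mul_transpose_mul_transpose]
  refine ⟨?_, ?_, ?_, ?_⟩
  · rw [Matrix.mul_assoc, hr, Matrix.mul_assoc, ← Matrix.mul_assoc M, h.1]
  · rw [hr, ← Matrix.mul_assoc, h.2.1]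
  · rw [h.transpose_mul_self_mul, h.2.2.2]
  · rw [hr, h.2.2.2]

theorem conj {k : Type*} [Fintype k] [DecidableEq k] {M N : Matrix k k ℝ} (W : Matrix m k ℝ)
    (hW : Wᵀ * W = 1) (h : IsMoorePenrose M N) : IsMoorePenrose (W * M * Wᵀ) (W * N * Wᵀ) := by
  have hmul (Y Z : Matrix k k ℝ) : W * Y * Wᵀ * (W * Z * Wᵀ) = W * (Y * Z) * Wᵀ := by
    simp only [Matrix.mul_assoc]
    rw [← Matrix.mul_assoc Wᵀ W, hW, Matrix.one_mul]
  refine ⟨?_, ?_, ?_, ?_⟩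
  · rw [hmul, hmul, h.1]
  · rw [hmul, hmul, h.2.1]
  · rw [hmul, transpose_mul, transpose_mul, transpose_transpose, h.2.2.1]
    simp only [Matrix.mul_assoc]
  · rw [hmul, transpose_mul, transpose_mul, transpose_transpose, h.2.2.2]
    simp only [Matrix.mul_assoc]

theorem posSemidef_one_sub_mul [DecidableEq m] (h : IsMoorePenrose M N) :
    (1 - M * N).PosSemidef := by
  have hidem : IsIdempotentElem (1 - M * N) :=
    IsIdempotentElem.one_sub (by rw [IsIdempotentElem, ← Matrix.mul_assoc, h.1])
  have hsymm : (1 - M * N)ᵀ = 1 - M * N := by rw [transpose_sub, transpose_one, h.2.2.1]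
  have := posSemidef_conjTranspose_mul_self (1 - M * N)
  rwa [conjTranspose_eq_transpose_of_trivial, hsymm, hidem.eq] at this

end IsMoorePenrose

section SVD

variable {m n r : Type*} [Fintype n] [Fintype r] [DecidableEq r]

theorem svd_mul_pinv {U : Matrix m r ℝ} {Λ : Matrix r r ℝ} {V : Matrix n r ℝ}
    (hV : Vᵀ * V = 1) (hΛ : IsUnit Λ.det) : U * Λ * Vᵀ * (V * Λ⁻¹ * Uᵀ) = U * Uᵀ := by
  simp only [Matrix.mul_assoc]
  rw [← Matrix.mul_assoc Vᵀ V, hV, Matrix.one_mul, mul_nonsing_inv_cancel_left Λ _ hΛ]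

theorem isMoorePenrose_svd [Fintype m] {U : Matrix m r ℝ} {Λ : Matrix r r ℝ} {V : Matrix n r ℝ}
    (hU : Uᵀ * U = 1) (hV : Vᵀ * V = 1) (hΛ : IsUnit Λ.det) :
    IsMoorePenrose (U * Λ * Vᵀ) (V * Λ⁻¹ * Uᵀ) := by
  have hNM : V * Λ⁻¹ * Uᵀ * (U * Λ * Vᵀ) = V * Vᵀ := by
    simp only [Matrix.mul_assoc]
    rw [← Matrix.mul_assoc Uᵀ U, hU, Matrix.one_mul, nonsing_inv_mul_cancel_left Λ _ hΛ]
  refine ⟨?_, ?_, ?_, ?_⟩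
  · rw [svd_mul_pinv hV hΛ, Matrix.mul_assoc, ← Matrix.mul_assoc Uᵀ, ← Matrix.mul_assoc Uᵀ, hU,
      Matrix.one_mul, Matrix.mul_assoc]
  · rw [hNM, Matrix.mul_assoc, ← Matrix.mul_assoc Vᵀ, ← Matrix.mul_assoc Vᵀ, hV,
      Matrix.one_mul, Matrix.mul_assoc]
  · rw [svd_mul_pinv hV hΛ, transpose_mul, transpose_transpose]
  · rw [hNM, transpose_mul, transpose_transpose]

end SVD

/-- `s` is the generalized Schur complement of `c`; `hb` says that the rows of `b` lie in the
row space of `c`. -/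
theorem isMoorePenrose_fromBlocks {r k : Type*} [Fintype r] [Fintype k] [DecidableEq r]
    {a s : Matrix r r ℝ} {b : Matrix r k ℝ} {c cp : Matrix k k ℝ}
    (hc : IsMoorePenrose c cp) (ha : aᵀ = a) (hcT : cᵀ = c) (hcpT : cpᵀ = cp)
    (hb : b * (c * cp) = b) (hs : a - b * cp * bᵀ = s) (hsdet : IsUnit s.det) :
    IsMoorePenrose (fromBlocks a b bᵀ c)
      (fromBlocks s⁻¹ (-(s⁻¹ * b * cp)) (-(cp * bᵀ * s⁻¹)) (cp + cp * bᵀ * s⁻¹ * b * cp)) := by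
  have hPT : (c * cp)ᵀ = c * cp := hc.2.2.1
  have hPb : c * cp * bᵀ = bᵀ := by rw [← hPT, ← transpose_mul, hb]
  have hPcp : c * cp * cp = cp := by
    rw [← hPT, transpose_mul, hcT, hcpT, hc.2.1]
  have hsT : sᵀ = s := by
    rw [← hs, transpose_sub, transpose_mul, transpose_mul, transpose_transpose, ha, hcpT,
      Matrix.mul_assoc]
  have has : a * s⁻¹ = 1 + b * cp * bᵀ * s⁻¹ := by
    rw [← sub_eq_iff_eq_add, ← Matrix.sub_mul, hs, mul_nonsing_inv _ hsdet]
  set M := fromBlocks a b bᵀ c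
  set N := fromBlocks s⁻¹ (-(s⁻¹ * b * cp)) (-(cp * bᵀ * s⁻¹)) (cp + cp * bᵀ * s⁻¹ * b * cp)
  have hMT : Mᵀ = M := by rw [fromBlocks_transpose, ha, hcT, transpose_transpose]
  have hNT : Nᵀ = N := by
    simp only [N, fromBlocks_transpose, transpose_neg, transpose_mul, transpose_add,
      transpose_transpose, transpose_nonsing_inv, hsT, hcpT, Matrix.mul_assoc]
  have hMN : M * N = fromBlocks 1 0 0 (c * cp) := by
    rw [fromBlocks_multiply]
    congr 1 <;> simp only [Matrix.mul_neg, Matrix.mul_add, ← Matrix.mul_assoc, has, hPb,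
      Matrix.add_mul, Matrix.one_mul] <;> abel
  have hNM : N * M = fromBlocks 1 0 0 (c * cp) := by
    rw [← hMT, ← hNT, ← transpose_mul, hMN, fromBlocks_transpose, hPT]
    simp only [transpose_one, transpose_zero]
  refine ⟨?_, ?_, ?_, ?_⟩
  · rw [hMN, fromBlocks_multiply]
    simp only [Matrix.one_mul, Matrix.zero_mul, add_zero, zero_add, hPb, hc.1, M]
  · rw [hNM, fromBlocks_multiply]
    simp only [Matrix.one_mul, Matrix.zero_mul, add_zero, zero_add, neg_zero, Matrix.mul_neg,
      Matrix.mul_add, ← Matrix.mul_assoc, hPcp, N]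
  · rw [hMN, fromBlocks_transpose, hPT]
    simp only [transpose_one, transpose_zero]
  · rw [hNM, fromBlocks_transpose, hPT]
    simp only [transpose_one, transpose_zero]

section OrthogonalSplit

variable {p r k : Type*} [Fintype p] [DecidableEq r] {V : Matrix p r ℝ} {Vt : Matrix p k ℝ}

theorem transpose_fromCols_mul_left (hV : Vᵀ * V = 1) (hVVt : Vᵀ * Vt = 0) :
    (fromCols V Vt)ᵀ * V = fromRows 1 0 := by
  rw [transpose_fromCols, fromRows_mul, hV, ← transpose_transpose V, ← transpose_mul, hVVt,
    transpose_zero]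

theorem transpose_fromCols_mul_self [DecidableEq k] (hV : Vᵀ * V = 1) (hVt : Vtᵀ * Vt = 1)
    (hVVt : Vᵀ * Vt = 0) : (fromCols V Vt)ᵀ * fromCols V Vt = 1 := by
  rw [transpose_fromCols, fromRows_mul_fromCols, hV, hVt, hVVt, ← transpose_transpose V,
    ← transpose_mul, hVVt, transpose_zero, fromBlocks_one]

theorem transpose_mul_conj_fromCols_mul [Fintype r] [Fintype k] (hV : Vᵀ * V = 1)
    (hVVt : Vᵀ * Vt = 0) (a : Matrix r r ℝ) (b : Matrix r k ℝ) (c : Matrix k r ℝ)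
    (d : Matrix k k ℝ) :
    Vᵀ * (fromCols V Vt * fromBlocks a b c d * (fromCols V Vt)ᵀ) * V = a := by
  calc Vᵀ * (fromCols V Vt * fromBlocks a b c d * (fromCols V Vt)ᵀ) * V
      = ((fromCols V Vt)ᵀ * V)ᵀ * fromBlocks a b c d * ((fromCols V Vt)ᵀ * V) := by
        simp only [transpose_mul, transpose_transpose, Matrix.mul_assoc]
    _ = a := by
      rw [transpose_fromCols_mul_left hV hVVt, transpose_fromRows, transpose_one, transpose_zero,
        fromCols_mul_fromBlocks, fromCols_mul_fromRows]
      simp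

theorem gram_add_eq_conj_fromBlocks {n : Type*} [Fintype n] [Fintype r] [Fintype k]
    [DecidableEq p] (hV : Vᵀ * V = 1) (hVVt : Vᵀ * Vt = 0)
    (hVfull : V * Vᵀ + Vt * Vtᵀ = 1) (G : Matrix n p ℝ) (S : Matrix r r ℝ) :
    Gᵀ * G + V * S * Vᵀ = fromCols V Vt *
      fromBlocks (S + (G * V)ᵀ * (G * V)) ((G * V)ᵀ * (G * Vt)) ((G * V)ᵀ * (G * Vt))ᵀ
        ((G * Vt)ᵀ * (G * Vt)) * (fromCols V Vt)ᵀ := by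
  set W := fromCols V Vt
  have hWWt : W * Wᵀ = 1 := by rw [transpose_fromCols, fromCols_mul_fromRows, hVfull]
  have hblocks : Wᵀ * (Gᵀ * G + V * S * Vᵀ) * W = fromBlocks (S + (G * V)ᵀ * (G * V))
      ((G * V)ᵀ * (G * Vt)) ((G * V)ᵀ * (G * Vt))ᵀ ((G * Vt)ᵀ * (G * Vt)) :=
    calc Wᵀ * (Gᵀ * G + V * S * Vᵀ) * W
        = (G * W)ᵀ * (G * W) + Wᵀ * V * S * (Wᵀ * V)ᵀ := by
          simp only [Matrix.mul_add, Matrix.add_mul, transpose_mul, transpose_transpose,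
            Matrix.mul_assoc]
      _ = _ := by
        rw [mul_fromCols, transpose_fromCols_mul_left hV hVVt, transpose_fromCols,
          fromRows_mul_fromCols, transpose_fromRows, fromRows_mul, fromRows_mul_fromCols,
          fromBlocks_add]
        simp [transpose_mul, add_comm]
  rw [← hblocks]
  simp only [← Matrix.mul_assoc]
  rw [hWWt, Matrix.one_mul, Matrix.mul_assoc _ W, hWWt, Matrix.mul_one]

end OrthogonalSplit

theorem IsMoorePenrose.mul_mul_transpose_mul_transpose {m n : Type*} [Fintype m] [Fintype n]
    {M : Matrix m n ℝ} {N : Matrix n m ℝ} (h : IsMoorePenrose M N) :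
    M * (N * Nᵀ) * Mᵀ = M * N := by
  rw [← Matrix.mul_assoc, Matrix.mul_assoc (M * N), ← transpose_mul, h.2.2.1,
    ← Matrix.mul_assoc, h.1]

theorem transpose_mul_pinv_mul_eq_inv {n p r k : Type*} [Fintype n] [Fintype p] [Fintype r]
    [Fintype k] [DecidableEq n] [DecidableEq p] [DecidableEq r] [DecidableEq k]
    {G : Matrix n p ℝ} {V : Matrix p r ℝ} {Vt : Matrix p k ℝ} {S : Matrix r r ℝ}
    {Hp : Matrix k n ℝ} {Ap : Matrix p p ℝ}
    (hV : Vᵀ * V = 1) (hVt : Vtᵀ * Vt = 1) (hVVt : Vᵀ * Vt = 0)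
    (hVfull : V * Vᵀ + Vt * Vtᵀ = 1) (hS : S.PosDef) (hH : IsMoorePenrose (G * Vt) Hp)
    (hA : IsMoorePenrose (Gᵀ * G + V * S * Vᵀ) Ap) :
    Vᵀ * Ap * V = (S + (G * V)ᵀ * (1 - G * Vt * Hp) * (G * V))⁻¹ := by
  set F := G * V
  set H := G * Vt
  set s := S + Fᵀ * (1 - H * Hp) * F
  have hST : Sᵀ = S := IsSymm.eq (by simpa using hS.1)
  have hschur : S + Fᵀ * F - Fᵀ * H * (Hp * Hpᵀ) * (Fᵀ * H)ᵀ = s := by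
    rw [transpose_mul Fᵀ H, transpose_transpose F,
      show Fᵀ * H * (Hp * Hpᵀ) * (Hᵀ * F) = Fᵀ * (H * (Hp * Hpᵀ) * Hᵀ) * F by
        simp only [Matrix.mul_assoc], hH.mul_mul_transpose_mul_transpose]
    simp only [s, Matrix.mul_sub, Matrix.sub_mul, Matrix.mul_one]
    abel
  have hs : s.PosDef := by
    have := hS.add_posSemidef (hH.posSemidef_one_sub_mul.conjTranspose_mul_mul_same F)
    rwa [conjTranspose_eq_transpose_of_trivial] at this
  have hb : Fᵀ * H * (Hᵀ * H * (Hp * Hpᵀ)) = Fᵀ * H := by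
    rw [hH.transpose_mul_self_mul, Matrix.mul_assoc, ← Matrix.mul_assoc H, hH.1]
  have hpinv := (isMoorePenrose_fromBlocks hH.transpose_mul_self
    (by simp [hST, transpose_mul]) (by simp) (by simp) hb hschur
    ((isUnit_iff_isUnit_det _).mp hs.isUnit)).conj _ (transpose_fromCols_mul_self hV hVt hVVt)
  rw [← gram_add_eq_conj_fromBlocks hV hVVt hVfull] at hpinv
  rw [hA.unique_s8 hpinv, transpose_mul_conj_fromCols_mul hV hVVt]

theorem DAdagDT_eq_general {n m p r k r' : ℕ}
    (X : Matrix (Fin n) (Fin p) ℝ) (D : Matrix (Fin m) (Fin p) ℝ) (ν : ℝ) (hν : 0 < ν)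
    (U : Matrix (Fin m) (Fin r) ℝ) (Λ : Matrix (Fin r) (Fin r) ℝ)
    (V : Matrix (Fin p) (Fin r) ℝ) (Vt : Matrix (Fin p) (Fin k) ℝ)
    (U₁ : Matrix (Fin n) (Fin r') ℝ) (Λ₁ : Matrix (Fin r') (Fin r') ℝ)
    (V₁ : Matrix (Fin k) (Fin r') ℝ)
    (hD : D = U * Λ * Vᵀ) (hU : Uᵀ * U = 1) (hΛ : Λ.PosDef) (hΛsym : Λᵀ = Λ)
    (hV : Vᵀ * V = 1) (hVt : Vtᵀ * Vt = 1) (hVVt : Vᵀ * Vt = 0)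
    (hVfull : V * Vᵀ + Vt * Vtᵀ = 1)
    (hX : X * Vt = Real.sqrt n • (U₁ * Λ₁ * V₁ᵀ))
    (hU₁ : U₁ᵀ * U₁ = 1) (hΛ₁ : Λ₁.PosDef) (hV₁ : V₁ᵀ * V₁ = 1)
    (Xstar : Matrix (Fin p) (Fin n) ℝ) (hXstar : Xstar = ((n : ℝ))⁻¹ • Xᵀ)
    (A : Matrix (Fin p) (Fin p) ℝ) (hA : A = ν • (Xstar * X) + Dᵀ * D)
    (Aplus : Matrix (Fin p) (Fin p) ℝ) (hAplus : IsMoorePenrose A Aplus)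
    (B : Matrix (Fin r) (Fin r) ℝ)
    (hB : B = Λ * Λ + ν • (Vᵀ * Xstar * ((1 : Matrix (Fin n) (Fin n) ℝ) - U₁ * U₁ᵀ) * X * V)) :
    D * Aplus * Dᵀ = U * Λ * B⁻¹ * Λ * Uᵀ ∧
      ν⁻¹ • ((1 : Matrix (Fin m) (Fin m) ℝ) - D * Aplus * Dᵀ) =
        ν⁻¹ • ((1 : Matrix (Fin m) (Fin m) ℝ) - U * Λ * B⁻¹ * Λ * Uᵀ) := by
  set G := Real.sqrt (ν / n) • X
  have hscale : Real.sqrt (ν / n) * Real.sqrt (ν / n) = ν * (n : ℝ)⁻¹ := by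
    rw [Real.mul_self_sqrt (by positivity), div_eq_mul_inv]
  have hGG : ν • (Xstar * X) = Gᵀ * G := by
    simp only [G, hXstar, transpose_smul, Matrix.smul_mul, Matrix.mul_smul, smul_smul, hscale]
  have hB' : B = Λ * Λ + (G * V)ᵀ * (1 - U₁ * U₁ᵀ) * (G * V) := by
    simp only [hB, G, hXstar, transpose_smul, transpose_mul, Matrix.smul_mul, Matrix.mul_smul,
      smul_smul, hscale, Matrix.mul_assoc]
  have hGVt : G * Vt = U₁ * (Real.sqrt ν • Λ₁) * V₁ᵀ := by
    rcases n.eq_zero_or_pos with rfl | hn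
    · ext i
      exact i.elim0
    have : Real.sqrt (ν / n) * Real.sqrt n = Real.sqrt ν := by
      rw [← Real.sqrt_mul (by positivity), div_mul_cancel₀ _ (by positivity)]
    simp only [G, Matrix.smul_mul, hX, smul_smul, this, Matrix.mul_smul]
  have hΛ₁' : IsUnit (Real.sqrt ν • Λ₁).det :=
    (isUnit_iff_isUnit_det _).mp (hΛ₁.smul (Real.sqrt_pos.mpr hν)).isUnit
  have hΛΛ : (Λ * Λ).PosDef := by
    have := PosDef.conjTranspose_mul_self Λ (mulVec_injective_of_isUnit hΛ.isUnit)
    rwa [conjTranspose_eq_transpose_of_trivial, hΛsym] at this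
  have hA' : A = Gᵀ * G + V * (Λ * Λ) * Vᵀ := by
    rw [hA, hGG, hD]
    simp only [transpose_mul, transpose_transpose, hΛsym, Matrix.mul_assoc]
    rw [← Matrix.mul_assoc Uᵀ U, hU, Matrix.one_mul]
  have key := transpose_mul_pinv_mul_eq_inv hV hVt hVVt hVfull hΛΛ
    (hGVt ▸ isMoorePenrose_svd hU₁ hV₁ hΛ₁') (hA' ▸ hAplus)
  rw [hGVt, svd_mul_pinv hV₁ hΛ₁', ← hB'] at key
  have hDAD : D * Aplus * Dᵀ = U * Λ * (Vᵀ * Aplus * V) * Λ * Uᵀ := by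
    simp only [hD, transpose_mul, transpose_transpose, hΛsym, Matrix.mul_assoc]
  rw [hDAD, key]
  exact ⟨rfl, rfl⟩

/-- With `D = U Λ Vᵀ` (compact SVD), `A = ν X*X + DᵀD` and
`B = Λ² + ν Vᵀ X*(I − U₁U₁ᵀ)X V`, one has `D A⁺ Dᵀ = U Λ B⁻¹ Λ Uᵀ`, hence
`Σ = (I − D A⁺ Dᵀ)/ν = (I − U Λ B⁻¹ Λ Uᵀ)/ν`. -/
theorem DAdagDT_eq {n m p r k r' : ℕ}
    (X : Matrix (Fin n) (Fin p) ℝ) (D : Matrix (Fin m) (Fin p) ℝ) (ν : ℝ) (hν : 0 < ν)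
    (U : Matrix (Fin m) (Fin r) ℝ) (Λ : Matrix (Fin r) (Fin r) ℝ)
    (V : Matrix (Fin p) (Fin r) ℝ) (Vt : Matrix (Fin p) (Fin k) ℝ)
    (U₁ : Matrix (Fin n) (Fin r') ℝ) (Λ₁ : Matrix (Fin r') (Fin r') ℝ)
    (V₁ : Matrix (Fin k) (Fin r') ℝ)
    (hD : D = U * Λ * Vᵀ) (hU : Uᵀ * U = 1) (hΛ : Λ.PosDef) (hΛsym : Λᵀ = Λ)
    (hV : Vᵀ * V = 1) (hVt : Vtᵀ * Vt = 1) (hVVt : Vᵀ * Vt = 0)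
    (hVfull : V * Vᵀ + Vt * Vtᵀ = 1)
    (hX : X * Vt = Real.sqrt n • (U₁ * Λ₁ * V₁ᵀ))
    (hU₁ : U₁ᵀ * U₁ = 1) (hΛ₁ : Λ₁.PosDef) (hΛ₁sym : Λ₁ᵀ = Λ₁) (hV₁ : V₁ᵀ * V₁ = 1)
    (Xstar : Matrix (Fin p) (Fin n) ℝ) (hXstar : Xstar = ((n : ℝ))⁻¹ • Xᵀ)
    (A : Matrix (Fin p) (Fin p) ℝ) (hA : A = ν • (Xstar * X) + Dᵀ * D)
    (Aplus : Matrix (Fin p) (Fin p) ℝ) (hAplus : IsMoorePenrose A Aplus)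
    (B : Matrix (Fin r) (Fin r) ℝ)
    (hB : B = Λ * Λ + ν • (Vᵀ * Xstar * ((1 : Matrix (Fin n) (Fin n) ℝ) - U₁ * U₁ᵀ) * X * V)) :
    D * Aplus * Dᵀ = U * Λ * B⁻¹ * Λ * Uᵀ ∧
      ν⁻¹ • ((1 : Matrix (Fin m) (Fin m) ℝ) - D * Aplus * Dᵀ) =
        ν⁻¹ • ((1 : Matrix (Fin m) (Fin m) ℝ) - U * Λ * B⁻¹ * Λ * Uᵀ) :=
  DAdagDT_eq_general X D ν hν U Λ V Vt U₁ Λ₁ V₁ hD hU hΛ hΛsym hV hVt hVVt hVfull hX hU₁ hΛ₁ hV₁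
    Xstar hXstar A hA Aplus hAplus B hB
end

section
/- With the notation D = UΛVᵀ (compact SVD), B = Λ² + ν Vᵀ X*(I − U₁U₁ᵀ)XV, and D A⁺ Dᵀ = U Λ B^{-1} Λ Uᵀ: suppose λ_D² I ⪯ Λ² and ‖X*X‖₂ ≤ Λ_X². Then Λ² ⪯ B ⪯ (1 + νΛ_X²/λ_D²)Λ², every eigenvalue of D A⁺ Dᵀ lies in [0,1], and every nonzero eigenvalue of D A⁺ Dᵀ is at least 1/(1 + νΛ_X²/λ_D²). -/
/-!
`B - Λ² = ν Vᵀ X* (I - U₁U₁ᵀ) X V` is a compression of `ν X* X` by an orthogonal projection,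
so `0 ⪯ B - Λ² ⪯ ν Λ_X² I ⪯ (ν Λ_X² / λ_D²) Λ²`. If `μ ≠ 0` is an eigenvalue of
`U Λ B⁻¹ Λ Uᵀ` with eigenvector `v`, then `z = B⁻¹ Λ Uᵀ v` is nonzero and solves the generalized
eigenproblem `Λ² z = μ B z`; comparing the quadratic forms `zᵀ Λ² z ≤ zᵀ B z ≤ c zᵀ Λ² z`,
where `c = 1 + ν Λ_X² / λ_D²`, gives `1/c ≤ μ ≤ 1`.
-/

open Matrix

/-- Euclidean operator norm of a real matrix. -/
noncomputable def matOpNorm {a b : Type*} [Fintype a] [Fintype b] [DecidableEq b]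
    (M : Matrix a b ℝ) : ℝ :=
  ‖LinearMap.toContinuousLinearMap (Matrix.toEuclideanLin M)‖

variable {k l : Type*}

lemma posSemidef_one_add_div_smul_sub_add_smul [DecidableEq k] {A S : Matrix k k ℝ} {d c ν : ℝ}
    (hA : (A - d • 1).PosSemidef) (hd : 0 < d) (hS : (c • 1 - S).PosSemidef) (hc : 0 ≤ c)
    (hν : 0 ≤ ν) : ((1 + ν * c / d) • A - (A + ν • S)).PosSemidef := by
  have h : (1 + ν * c / d) • A - (A + ν • S) = (ν * c / d) • (A - d • 1) + ν • (c • 1 - S) := by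
    match_scalars <;> field_simp <;> ring
  rw [h]
  exact (hA.smul (by positivity)).add (hS.smul hν)

variable [Fintype k] [Fintype l]

lemma dotProduct_mulVec_le_matOpNorm_mul [DecidableEq k] (A : Matrix k k ℝ) (x : k → ℝ) :
    x ⬝ᵥ A *ᵥ x ≤ matOpNorm A * (x ⬝ᵥ x) := by
  set L := LinearMap.toContinuousLinearMap (Matrix.toEuclideanLin A)
  set v : EuclideanSpace ℝ k := WithLp.toLp 2 x
  have hL : x ⬝ᵥ A *ᵥ x = inner ℝ v (L v) := by
    rw [dotProduct_comm]; rfl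
  have hv : x ⬝ᵥ x = ‖v‖ ^ 2 := by
    rw [← real_inner_self_eq_norm_sq]; rfl
  rw [hL, hv]
  calc inner ℝ v (L v) ≤ ‖v‖ * ‖L v‖ := real_inner_le_norm v (L v)
    _ ≤ ‖v‖ * (‖L‖ * ‖v‖) := by gcongr; exact L.le_opNorm v
    _ = matOpNorm A * ‖v‖ ^ 2 := by rw [matOpNorm]; ring

lemma posSemidef_smul_one_sub_of_matOpNorm_le [DecidableEq k] {A : Matrix k k ℝ}
    (hA : A.IsHermitian) {c : ℝ} (h : matOpNorm A ≤ c) : (c • 1 - A).PosSemidef := by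
  refine .of_dotProduct_mulVec_nonneg ((isHermitian_one.smul (IsSelfAdjoint.all c)).sub hA)
    fun x => ?_
  have hx := dotProduct_mulVec_le_matOpNorm_mul A x
  have hxx : 0 ≤ x ⬝ᵥ x := by simpa using dotProduct_star_self_nonneg x
  simp only [star_trivial, sub_mulVec, smul_mulVec, one_mulVec, dotProduct_sub, dotProduct_smul,
    smul_eq_mul]
  nlinarith

lemma Matrix.PosSemidef.transpose_mul_mul_same {A : Matrix k k ℝ} (hA : A.PosSemidef)
    (W : Matrix k l ℝ) : (Wᵀ * A * W).PosSemidef := by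
  simpa using hA.conjTranspose_mul_mul_same W

lemma posSemidef_one_sub_mul_transpose [DecidableEq k] [DecidableEq l] {W : Matrix k l ℝ}
    (hW : Wᵀ * W = 1) : (1 - W * Wᵀ).PosSemidef := by
  have hidem : W * Wᵀ * (W * Wᵀ) = W * Wᵀ := by
    rw [Matrix.mul_assoc, ← Matrix.mul_assoc Wᵀ, hW, Matrix.one_mul]
  have hsq : (1 - W * Wᵀ)ᵀ * (1 - W * Wᵀ) = 1 - W * Wᵀ := by
    rw [transpose_sub, transpose_one, transpose_mul, transpose_transpose, sub_mul, mul_sub, mul_sub,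
      hidem]
    simp only [one_mul, mul_one, sub_self, sub_zero]
  have := posSemidef_conjTranspose_mul_self (1 - W * Wᵀ)
  rwa [conjTranspose_eq_transpose_of_trivial, hsq] at this

lemma posSemidef_smul_one_sub_transpose_mul_mul [DecidableEq k] [DecidableEq l] {M : Matrix k k ℝ}
    {c : ℝ} (hM : (c • 1 - M).PosSemidef) {V : Matrix k l ℝ} (hV : Vᵀ * V = 1) :
    (c • 1 - Vᵀ * M * V).PosSemidef := by
  have h := hM.transpose_mul_mul_same V
  rwa [Matrix.mul_sub, Matrix.sub_mul, Matrix.mul_smul, Matrix.mul_one, Matrix.smul_mul, hV] at h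

lemma posSemidef_smul_transpose_mul_one_sub_mul {a r : Type*} [Fintype a] [Fintype r]
    [DecidableEq a] [DecidableEq r] (X : Matrix a k ℝ) {W : Matrix a r ℝ} (hW : Wᵀ * W = 1)
    {t : ℝ} (ht : 0 ≤ t) : (t • Xᵀ * (1 - W * Wᵀ) * X).PosSemidef := by
  rw [smul_mul, smul_mul]
  exact ((posSemidef_one_sub_mul_transpose hW).transpose_mul_mul_same X).smul ht

lemma posSemidef_smul_one_sub_smul_transpose_mul_one_sub_mul [DecidableEq k] {a r : Type*}
    [Fintype a] [Fintype r] [DecidableEq a] {X : Matrix a k ℝ} {W : Matrix a r ℝ} {t c : ℝ}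
    (ht : 0 ≤ t) (hX : matOpNorm (t • Xᵀ * X) ≤ c) :
    (c • 1 - t • Xᵀ * (1 - W * Wᵀ) * X).PosSemidef := by
  have hXX : (c • 1 - t • Xᵀ * X).PosSemidef := by
    refine posSemidef_smul_one_sub_of_matOpNorm_le ?_ hX
    rw [smul_mul]
    simpa using (isHermitian_conjTranspose_mul_self X).smul (IsSelfAdjoint.all t)
  have hWW : (t • Xᵀ * (W * Wᵀ) * X).PosSemidef := by
    rw [smul_mul, smul_mul]
    simpa using ((posSemidef_self_mul_conjTranspose W).transpose_mul_mul_same X).smul ht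
  have h : c • 1 - t • Xᵀ * (1 - W * Wᵀ) * X = (c • 1 - t • Xᵀ * X) + t • Xᵀ * (W * Wᵀ) * X := by
    rw [Matrix.mul_sub, Matrix.sub_mul, Matrix.mul_one]
    abel
  exact h ▸ hXX.add hWW

lemma exists_mulVec_eq_smul_mulVec_of_hasEigenvalue [DecidableEq l] {m : Type*} [Fintype m]
    [DecidableEq m] {U : Matrix m l ℝ} (hU : Uᵀ * U = 1) {Λ B : Matrix l l ℝ} (hB : IsUnit B.det)
    {μ : ℝ} (hμ : Module.End.HasEigenvalue (U * Λ * B⁻¹ * Λ * Uᵀ).mulVecLin μ) (hμ0 : μ ≠ 0) :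
    ∃ z ≠ 0, (Λ * Λ) *ᵥ z = μ • B *ᵥ z := by
  obtain ⟨v, hv⟩ := hμ.exists_hasEigenvector
  have hMv : (U * Λ * B⁻¹ * Λ * Uᵀ) *ᵥ v = μ • v := hv.apply_eq_smul
  set z := (B⁻¹ * Λ * Uᵀ) *ᵥ v
  have hBz : B *ᵥ z = (Λ * Uᵀ) *ᵥ v := by
    rw [mulVec_mulVec, ← Matrix.mul_assoc, ← Matrix.mul_assoc, mul_nonsing_inv B hB, Matrix.one_mul]
  have hUz : (U * Λ) *ᵥ z = μ • v := by
    rw [mulVec_mulVec, ← hMv]; simp only [Matrix.mul_assoc]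
  have hΛz : Λ *ᵥ z = μ • Uᵀ *ᵥ v := by
    calc Λ *ᵥ z = (Uᵀ * (U * Λ)) *ᵥ z := by rw [← Matrix.mul_assoc, hU, Matrix.one_mul]
      _ = μ • Uᵀ *ᵥ v := by rw [← mulVec_mulVec, hUz, mulVec_smul]
  refine ⟨z, fun hz => ?_, ?_⟩
  · rw [hz, mulVec_zero, eq_comm, smul_eq_zero] at hUz
    exact hUz.elim hμ0 hv.2
  · rw [← mulVec_mulVec, hΛz, hBz, mulVec_smul, mulVec_mulVec]

lemma mem_Icc_of_mulVec_eq_smul_mulVec {A B : Matrix k k ℝ} {c μ : ℝ} (hA : A.PosDef)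
    (hBA : (B - A).PosSemidef) (hcAB : (c • A - B).PosSemidef) {z : k → ℝ} (hz : z ≠ 0)
    (h : A *ᵥ z = μ • B *ᵥ z) : μ ∈ Set.Icc (1 / c) 1 := by
  have ha : 0 < z ⬝ᵥ A *ᵥ z := by simpa using hA.dotProduct_mulVec_pos hz
  have hb : z ⬝ᵥ A *ᵥ z ≤ z ⬝ᵥ B *ᵥ z := by
    simpa [sub_mulVec, dotProduct_sub] using hBA.dotProduct_mulVec_nonneg z
  have hbc : z ⬝ᵥ B *ᵥ z ≤ c * z ⬝ᵥ A *ᵥ z := by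
    simpa [sub_mulVec, dotProduct_sub, smul_mulVec] using hcAB.dotProduct_mulVec_nonneg z
  have hab : z ⬝ᵥ A *ᵥ z = μ * z ⬝ᵥ B *ᵥ z := by rw [h, dotProduct_smul, smul_eq_mul]
  have hB : 0 < z ⬝ᵥ B *ᵥ z := ha.trans_le hb
  have hc : 0 < c := by nlinarith
  constructor
  · rw [div_le_iff₀ hc]; nlinarith
  · nlinarith

theorem B_bounds_and_eigenvalues_general {n m p r r' : ℕ}
    (X : Matrix (Fin n) (Fin p) ℝ) (D : Matrix (Fin m) (Fin p) ℝ) (ν : ℝ) (hν : 0 < ν)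
    (U : Matrix (Fin m) (Fin r) ℝ) (Λ : Matrix (Fin r) (Fin r) ℝ)
    (V : Matrix (Fin p) (Fin r) ℝ) (U₁ : Matrix (Fin n) (Fin r') ℝ)
    (hU : Uᵀ * U = 1) (hV : Vᵀ * V = 1) (hU₁ : U₁ᵀ * U₁ = 1)
    (Xstar : Matrix (Fin p) (Fin n) ℝ) (hXstar : Xstar = ((n : ℝ))⁻¹ • Xᵀ)
    (lamD LamX : ℝ) (hlamD : 0 < lamD)
    (hΛlow : (Λ * Λ - (lamD ^ 2) • (1 : Matrix (Fin r) (Fin r) ℝ)).PosSemidef)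
    (hXX : matOpNorm (Xstar * X) ≤ LamX ^ 2)
    (B : Matrix (Fin r) (Fin r) ℝ)
    (hB : B = Λ * Λ + ν • (Vᵀ * Xstar * ((1 : Matrix (Fin n) (Fin n) ℝ) - U₁ * U₁ᵀ) * X * V))
    (Aplus : Matrix (Fin p) (Fin p) ℝ)
    (hDAD : D * Aplus * Dᵀ = U * Λ * B⁻¹ * Λ * Uᵀ) :
    (B - Λ * Λ).PosSemidef ∧
    ((1 + ν * LamX ^ 2 / lamD ^ 2) • (Λ * Λ) - B).PosSemidef ∧
    (∀ μ : ℝ, Module.End.HasEigenvalue (D * Aplus * Dᵀ).mulVecLin μ →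
      (0 ≤ μ ∧ μ ≤ 1) ∧ (μ ≠ 0 → 1 / (1 + ν * LamX ^ 2 / lamD ^ 2) ≤ μ)) := by
  subst hXstar
  have hn : (0 : ℝ) ≤ (n : ℝ)⁻¹ := by positivity
  have hS : (Vᵀ * ((n : ℝ)⁻¹ • Xᵀ) * (1 - U₁ * U₁ᵀ) * X * V).PosSemidef := by
    simpa only [Matrix.mul_assoc] using
      (posSemidef_smul_transpose_mul_one_sub_mul X hU₁ hn).transpose_mul_mul_same V
  have hSle : (LamX ^ 2 • 1 - Vᵀ * ((n : ℝ)⁻¹ • Xᵀ) * (1 - U₁ * U₁ᵀ) * X * V).PosSemidef := by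
    simpa only [Matrix.mul_assoc] using posSemidef_smul_one_sub_transpose_mul_mul
      (posSemidef_smul_one_sub_smul_transpose_mul_one_sub_mul (W := U₁) hn hXX) hV
  have hlower : (B - Λ * Λ).PosSemidef := by
    rw [hB, add_sub_cancel_left]
    exact hS.smul hν.le
  have hupper : ((1 + ν * LamX ^ 2 / lamD ^ 2) • (Λ * Λ) - B).PosSemidef :=
    hB ▸ posSemidef_one_add_div_smul_sub_add_smul hΛlow (by positivity) hSle (sq_nonneg _) hν.le
  have hΛΛ : (Λ * Λ).PosDef := by
    simpa using PosDef.posSemidef_add hΛlow (PosDef.one.smul (pow_pos hlamD 2))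
  have hBdet : IsUnit B.det := by
    have hBpos : B.PosDef := by simpa using hΛΛ.add_posSemidef hlower
    exact (isUnit_iff_isUnit_det B).mp hBpos.isUnit
  refine ⟨hlower, hupper, fun μ hμ => ?_⟩
  rcases eq_or_ne μ 0 with rfl | hμ0
  · simp
  obtain ⟨z, hz, hzB⟩ := exists_mulVec_eq_smul_mulVec_of_hasEigenvalue hU hBdet (hDAD ▸ hμ) hμ0
  obtain ⟨hμlow, hμ1⟩ := mem_Icc_of_mulVec_eq_smul_mulVec hΛΛ hlower hupper hz hzB
  have hc : 0 < 1 / (1 + ν * LamX ^ 2 / lamD ^ 2) := by positivity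
  exact ⟨⟨hc.le.trans hμlow, hμ1⟩, fun _ => hμlow⟩

/-- If `λ_D² I ⪯ Λ²` and `‖X*X‖₂ ≤ Λ_X²`, then `Λ² ⪯ B ⪯ (1 + νΛ_X²/λ_D²)Λ²`,
every eigenvalue of `D A⁺ Dᵀ = U Λ B⁻¹ Λ Uᵀ` lies in `[0,1]`, and every nonzero
eigenvalue is at least `1/(1 + νΛ_X²/λ_D²)`. -/
theorem B_bounds_and_eigenvalues {n m p r r' : ℕ}
    (X : Matrix (Fin n) (Fin p) ℝ) (D : Matrix (Fin m) (Fin p) ℝ) (ν : ℝ) (hν : 0 < ν)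
    (U : Matrix (Fin m) (Fin r) ℝ) (Λ : Matrix (Fin r) (Fin r) ℝ)
    (V : Matrix (Fin p) (Fin r) ℝ) (U₁ : Matrix (Fin n) (Fin r') ℝ)
    (hU : Uᵀ * U = 1) (hΛsym : Λᵀ = Λ) (hV : Vᵀ * V = 1) (hU₁ : U₁ᵀ * U₁ = 1)
    (Xstar : Matrix (Fin p) (Fin n) ℝ) (hXstar : Xstar = ((n : ℝ))⁻¹ • Xᵀ)
    (lamD LamX : ℝ) (hlamD : 0 < lamD)
    (hΛlow : (Λ * Λ - (lamD ^ 2) • (1 : Matrix (Fin r) (Fin r) ℝ)).PosSemidef)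
    (hXX : matOpNorm (Xstar * X) ≤ LamX ^ 2)
    (B : Matrix (Fin r) (Fin r) ℝ)
    (hB : B = Λ * Λ + ν • (Vᵀ * Xstar * ((1 : Matrix (Fin n) (Fin n) ℝ) - U₁ * U₁ᵀ) * X * V))
    (Aplus : Matrix (Fin p) (Fin p) ℝ)
    (hDAD : D * Aplus * Dᵀ = U * Λ * B⁻¹ * Λ * Uᵀ) :
    (B - Λ * Λ).PosSemidef ∧
    ((1 + ν * LamX ^ 2 / lamD ^ 2) • (Λ * Λ) - B).PosSemidef ∧
    (∀ μ : ℝ, Module.End.HasEigenvalue (D * Aplus * Dᵀ).mulVecLin μ →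
      (0 ≤ μ ∧ μ ≤ 1) ∧ (μ ≠ 0 → 1 / (1 + ν * LamX ^ 2 / lamD ^ 2) ≤ μ)) :=
  B_bounds_and_eigenvalues_general X D ν hν U Λ V U₁ hU hV hU₁ Xstar hXstar lamD LamX hlamD hΛlow
    hXX B hB Aplus hDAD
end

section
/- Under the setup of the previous statement, (D A⁺ X*)(D A⁺ X*)ᵀ = (1/(nν))(D A⁺ Dᵀ − (D A⁺ Dᵀ)²), and consequently (D A⁺ X*)(D A⁺ X*)ᵀ ⪯ (Λ_X²/(n λ_D²)) I. -/
open Matrix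

/-!
Write `S = D A⁺ Dᵀ`. Since `X* X*ᵀ = X* X / n = (A - DᵀD) / (nν)` and `A⁺ A A⁺ = A⁺`, the product
`(D A⁺ X*)(D A⁺ X*)ᵀ` equals `(S - S²) / (nν)`. For the bound, put `B = Λ² + νM`, where
`M = Vᵀ X* (1 - U₁U₁ᵀ) X V` satisfies `0 ≤ M ≤ Λ_X²` in the Loewner order, and `W = B⁻¹ Λ Uᵀ`.
Then `S = U Λ B⁻¹ Λ Uᵀ` and `S - S² = Wᵀ (B - Λ²) W = ν Wᵀ M W ≤ ν Λ_X² Wᵀ W`. Finally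
`λ_D² Wᵀ W ≤ 1`: the vector `w = W x` solves `B w = Λ Uᵀ x`, so
`λ_D² |w|² ≤ |Λ w|² ≤ ⟪w, B w⟫ = ⟪Λ w, Uᵀ x⟫`, which forces `|Λ w| ≤ |Uᵀ x| ≤ |x|`.
-/

open scoped MatrixOrder

namespace Matrix

variable {ι κ : Type*}

lemma smul_le_smul_of_le {A B : Matrix ι ι ℝ} (h : A ≤ B) {c : ℝ} (hc : 0 ≤ c) :
    c • A ≤ c • B := by
  rw [le_iff, ← smul_sub]
  exact (le_iff.mp h).smul hc

lemma smul_one_le_smul_one [DecidableEq ι] {c d : ℝ} (h : c ≤ d) :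
    c • (1 : Matrix ι ι ℝ) ≤ d • 1 := by
  rw [le_iff, ← sub_smul]
  exact PosSemidef.one.smul (sub_nonneg.mpr h)

lemma projected_gram_eq {π : Type*} [Fintype ι] [Fintype π] (a : ℝ) (X : Matrix ι π ℝ)
    (V : Matrix π κ ℝ) (Q : Matrix ι ι ℝ) :
    Vᵀ * (a⁻¹ • Xᵀ) * Q * X * V = a⁻¹ • ((X * V)ᵀ * Q * (X * V)) := by
  simp only [transpose_mul, Matrix.smul_mul, Matrix.mul_smul, Matrix.mul_assoc]

variable [Fintype ι] [Fintype κ]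

lemma dotProduct_mulVec_le_matOpNorm_mul [DecidableEq ι] (M : Matrix ι ι ℝ) (x : ι → ℝ) :
    x ⬝ᵥ (M *ᵥ x) ≤ matOpNorm M * (x ⬝ᵥ x) := by
  set T := LinearMap.toContinuousLinearMap (toEuclideanLin M)
  set v : EuclideanSpace ℝ ι := WithLp.toLp 2 x
  have hquad : x ⬝ᵥ (M *ᵥ x) = inner ℝ v (T v) := dotProduct_comm _ _
  have hnorm : x ⬝ᵥ x = ‖v‖ ^ 2 := real_inner_self_eq_norm_sq v
  calc x ⬝ᵥ (M *ᵥ x) = inner ℝ v (T v) := hquad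
    _ ≤ ‖v‖ * ‖T v‖ := real_inner_le_norm _ _
    _ ≤ ‖v‖ * (‖T‖ * ‖v‖) := by gcongr; exact T.le_opNorm v
    _ = matOpNorm M * (x ⬝ᵥ x) := by rw [hnorm, matOpNorm]; ring

lemma dotProduct_mulVec_le_of_le {A B : Matrix ι ι ℝ} (h : A ≤ B) (x : ι → ℝ) :
    x ⬝ᵥ (A *ᵥ x) ≤ x ⬝ᵥ (B *ᵥ x) := by
  have := (le_iff.mp h).dotProduct_mulVec_nonneg x
  rw [star_trivial, sub_mulVec, dotProduct_sub] at this
  linarith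

lemma le_of_dotProduct_mulVec_le {A B : Matrix ι ι ℝ} (hA : Aᵀ = A) (hB : Bᵀ = B)
    (h : ∀ x, x ⬝ᵥ (A *ᵥ x) ≤ x ⬝ᵥ (B *ᵥ x)) : A ≤ B :=
  le_iff.mpr <| .of_dotProduct_mulVec_nonneg
    (by rw [IsHermitian, conjTranspose_eq_transpose_of_trivial, transpose_sub, hA, hB])
    fun x ↦ by simpa [sub_mulVec, dotProduct_sub] using h x

lemma le_matOpNorm_smul_one [DecidableEq ι] {M : Matrix ι ι ℝ} (hM : Mᵀ = M) :
    M ≤ matOpNorm M • 1 :=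
  le_of_dotProduct_mulVec_le hM (by simp) fun x ↦ by
    simpa [smul_mulVec] using dotProduct_mulVec_le_matOpNorm_mul M x

lemma transpose_mul_mul_le_transpose_mul_mul {A B : Matrix ι ι ℝ} (h : A ≤ B)
    (K : Matrix ι κ ℝ) : Kᵀ * A * K ≤ Kᵀ * B * K := by
  rw [le_iff, ← Matrix.sub_mul, ← Matrix.mul_sub]
  simpa using (le_iff.mp h).conjTranspose_mul_mul_same K

lemma mul_transpose_le_one [DecidableEq ι] [DecidableEq κ] {U : Matrix ι κ ℝ}
    (hU : Uᵀ * U = 1) : U * Uᵀ ≤ 1 := by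
  have hproj : 1 - U * Uᵀ = (1 - U * Uᵀ)ᴴ * (1 - U * Uᵀ) := by
    simp only [conjTranspose_eq_transpose_of_trivial, transpose_sub, transpose_one,
      transpose_mul, transpose_transpose, Matrix.sub_mul, Matrix.mul_sub, Matrix.one_mul,
      Matrix.mul_one, Matrix.mul_assoc]
    rw [← Matrix.mul_assoc Uᵀ U, hU, Matrix.one_mul]
    abel
  rw [le_iff, hproj]
  exact posSemidef_conjTranspose_mul_self _

lemma mul_dotProduct_self_le_of_mulVec_eq [DecidableEq κ] {Λ B : Matrix κ κ ℝ} {c : ℝ}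
    (hΛ : Λᵀ = Λ) (hΛc : c • 1 ≤ Λ * Λ) (hΛB : Λ * Λ ≤ B) {w z : κ → ℝ}
    (hw : B *ᵥ w = Λ *ᵥ z) : c * (w ⬝ᵥ w) ≤ z ⬝ᵥ z := by
  set y := Λ *ᵥ w
  have hΛΛ : w ⬝ᵥ ((Λ * Λ) *ᵥ w) = y ⬝ᵥ y := by
    rw [← mulVec_mulVec, dotProduct_mulVec, ← mulVec_transpose, hΛ]
  have hcw : c * (w ⬝ᵥ w) ≤ y ⬝ᵥ y := by
    simpa [smul_mulVec, hΛΛ] using dotProduct_mulVec_le_of_le hΛc w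
  have hyz : y ⬝ᵥ y ≤ y ⬝ᵥ z := by
    have := dotProduct_mulVec_le_of_le hΛB w
    rwa [hΛΛ, hw, dotProduct_mulVec w, ← mulVec_transpose, hΛ] at this
  -- `‖y‖² ≤ ⟪y, z⟫ ≤ (‖y‖² + ‖z‖²) / 2`
  have hsq : 0 ≤ (y - z) ⬝ᵥ (y - z) := by simpa using dotProduct_self_star_nonneg (y - z)
  rw [sub_dotProduct, dotProduct_sub, dotProduct_sub, dotProduct_comm z y] at hsq
  linarith

lemma smul_transpose_mul_self_le_one [DecidableEq ι] [DecidableEq κ] {U : Matrix ι κ ℝ}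
    {Λ B : Matrix κ κ ℝ} {c : ℝ} (hU : Uᵀ * U = 1) (hΛ : Λᵀ = Λ) (hΛc : c • 1 ≤ Λ * Λ)
    (hΛB : Λ * Λ ≤ B) (hB : IsUnit B.det) :
    c • ((B⁻¹ * Λ * Uᵀ)ᵀ * (B⁻¹ * Λ * Uᵀ)) ≤ 1 :=
  le_of_dotProduct_mulVec_le (by simp) (by simp) fun x ↦ by
    have hw : B *ᵥ ((B⁻¹ * Λ * Uᵀ) *ᵥ x) = Λ *ᵥ (Uᵀ *ᵥ x) := by
      rw [mulVec_mulVec, ← Matrix.mul_assoc, ← Matrix.mul_assoc, mul_nonsing_inv _ hB,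
        Matrix.one_mul, mulVec_mulVec]
    have hUx : (Uᵀ *ᵥ x) ⬝ᵥ (Uᵀ *ᵥ x) ≤ x ⬝ᵥ x := by
      simpa [← mulVec_mulVec, dotProduct_mulVec, ← mulVec_transpose]
        using dotProduct_mulVec_le_of_le (mul_transpose_le_one hU) x
    have := mul_dotProduct_self_le_of_mulVec_eq hΛ hΛc hΛB hw
    simp only [smul_mulVec, dotProduct_smul, smul_eq_mul, one_mulVec]
    rw [← mulVec_mulVec, dotProduct_mulVec, ← mulVec_transpose, transpose_transpose]
    linarith

lemma sub_mul_self_eq_transpose_mul_sub_mul [DecidableEq κ] {U : Matrix ι κ ℝ}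
    {Λ B : Matrix κ κ ℝ} (hU : Uᵀ * U = 1) (hΛ : Λᵀ = Λ) (hBsym : Bᵀ = B)
    (hB : IsUnit B.det) :
    U * Λ * B⁻¹ * Λ * Uᵀ - (U * Λ * B⁻¹ * Λ * Uᵀ) * (U * Λ * B⁻¹ * Λ * Uᵀ) =
      (B⁻¹ * Λ * Uᵀ)ᵀ * (B - Λ * Λ) * (B⁻¹ * Λ * Uᵀ) := by
  have hBinv : (B⁻¹)ᵀ = B⁻¹ := by rw [transpose_nonsing_inv, hBsym]
  simp only [transpose_mul, transpose_transpose, hΛ, hBinv, Matrix.mul_sub, Matrix.sub_mul,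
    Matrix.mul_assoc]
  rw [← Matrix.mul_assoc Uᵀ U, hU, Matrix.one_mul, ← Matrix.mul_assoc B B⁻¹,
    mul_nonsing_inv _ hB, Matrix.one_mul]

theorem sub_mul_self_le_smul_one [DecidableEq ι] [DecidableEq κ] {U : Matrix ι κ ℝ}
    {Λ M B : Matrix κ κ ℝ} {ν c lam : ℝ} (hν : 0 ≤ ν) (hc : 0 ≤ c) (hlam : 0 < lam)
    (hU : Uᵀ * U = 1) (hΛ : Λᵀ = Λ) (hΛlam : lam ^ 2 • 1 ≤ Λ * Λ) (hM : 0 ≤ M)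
    (hMc : M ≤ c • 1) (hB : B = Λ * Λ + ν • M) :
    U * Λ * B⁻¹ * Λ * Uᵀ - (U * Λ * B⁻¹ * Λ * Uᵀ) * (U * Λ * B⁻¹ * Λ * Uᵀ) ≤
      (ν * c / lam ^ 2) • 1 := by
  have hΛΛ : (Λ * Λ).PosDef := by
    rw [← sub_add_cancel (Λ * Λ) (lam ^ 2 • 1)]
    exact PosDef.posSemidef_add (le_iff.mp hΛlam) (PosDef.one.smul (by positivity))
  have hBpd : B.PosDef := hB ▸ hΛΛ.add_posSemidef ((nonneg_iff_posSemidef.mp hM).smul hν)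
  have hBunit : IsUnit B.det := (isUnit_iff_isUnit_det B).mp hBpd.isUnit
  have hBsym : Bᵀ = B := by simpa using hBpd.isHermitian.eq
  have hΛB : Λ * Λ ≤ B := by
    rw [hB]
    exact le_add_of_nonneg_right ((nonneg_iff_posSemidef.mp hM).smul hν).nonneg
  have hBΛ : B - Λ * Λ = ν • M := by rw [hB, add_sub_cancel_left]
  set W := B⁻¹ * Λ * Uᵀ
  rw [sub_mul_self_eq_transpose_mul_sub_mul hU hΛ hBsym hBunit, hBΛ]
  calc Wᵀ * (ν • M) * W ≤ Wᵀ * ((ν * c) • 1) * W :=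
        transpose_mul_mul_le_transpose_mul_mul (by
          rw [mul_smul]; exact smul_le_smul_of_le hMc hν) W
    _ = (ν * c / lam ^ 2) • (lam ^ 2 • (Wᵀ * W)) := by
        rw [smul_smul, div_mul_cancel₀ _ (by positivity), Matrix.mul_smul, Matrix.smul_mul,
          Matrix.mul_one]
    _ ≤ (ν * c / lam ^ 2) • 1 :=
        smul_le_smul_of_le (smul_transpose_mul_self_le_one hU hΛ hΛlam hΛB hBunit)
          (by positivity)

variable {ρ π : Type*} [Fintype ρ] [Fintype π]

theorem mul_transpose_self_eq_smul_sub_mul_self {a ν : ℝ} (hν : ν ≠ 0) {X : Matrix ι π ℝ}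
    {D : Matrix κ π ℝ} {Xstar : Matrix π ι ℝ} {A Aplus : Matrix π π ℝ}
    (hXstar : Xstar = a⁻¹ • Xᵀ) (hA : A = ν • (Xstar * X) + Dᵀ * D)
    (hAplus : Aplus * A * Aplus = Aplus) (hsym : Aplusᵀ = Aplus) :
    (D * Aplus * Xstar) * (D * Aplus * Xstar)ᵀ =
      (a * ν)⁻¹ • (D * Aplus * Dᵀ - (D * Aplus * Dᵀ) * (D * Aplus * Dᵀ)) := by
  have hgram : Xstar * Xstarᵀ = (a * ν)⁻¹ • (A - Dᵀ * D) := by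
    rw [hA, add_sub_cancel_right, smul_smul, mul_inv, mul_assoc, inv_mul_cancel₀ hν, mul_one,
      hXstar, transpose_smul, transpose_transpose]
    simp only [Matrix.smul_mul, Matrix.mul_smul]
  calc (D * Aplus * Xstar) * (D * Aplus * Xstar)ᵀ
      = D * Aplus * (Xstar * Xstarᵀ) * (Aplus * Dᵀ) := by
        simp only [transpose_mul, hsym, Matrix.mul_assoc]
    _ = (a * ν)⁻¹ • (D * (Aplus * A * Aplus) * Dᵀ - (D * Aplus * Dᵀ) * (D * Aplus * Dᵀ)) := by
        rw [hgram]
        simp only [Matrix.mul_smul, Matrix.smul_mul, Matrix.mul_sub, Matrix.sub_mul,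
          Matrix.mul_assoc]
    _ = (a * ν)⁻¹ • (D * Aplus * Dᵀ - (D * Aplus * Dᵀ) * (D * Aplus * Dᵀ)) := by rw [hAplus]

lemma projected_gram_nonneg [DecidableEq ι] [DecidableEq ρ] {a : ℝ} (ha : 0 ≤ a)
    (X : Matrix ι π ℝ) (V : Matrix π κ ℝ) {U₁ : Matrix ι ρ ℝ} (hU₁ : U₁ᵀ * U₁ = 1) :
    0 ≤ Vᵀ * (a⁻¹ • Xᵀ) * (1 - U₁ * U₁ᵀ) * X * V := by
  have := smul_le_smul_of_le (transpose_mul_mul_le_transpose_mul_mul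
    (sub_nonneg.mpr (mul_transpose_le_one hU₁)) (X * V)) (inv_nonneg.mpr ha)
  rw [projected_gram_eq]
  simpa using this

lemma projected_gram_le [DecidableEq ι] [DecidableEq κ] [DecidableEq π] {a L : ℝ} (ha : 0 ≤ a)
    {X : Matrix ι π ℝ} {V : Matrix π κ ℝ} (hV : Vᵀ * V = 1) (U₁ : Matrix ι ρ ℝ)
    (hL : matOpNorm (a⁻¹ • Xᵀ * X) ≤ L) :
    Vᵀ * (a⁻¹ • Xᵀ) * (1 - U₁ * U₁ᵀ) * X * V ≤ L • 1 := by
  have hU₁ : 0 ≤ U₁ * U₁ᵀ := by simpa using (posSemidef_self_mul_conjTranspose U₁).nonneg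
  have hsym : (a⁻¹ • Xᵀ * X)ᵀ = a⁻¹ • Xᵀ * X := by simp
  calc Vᵀ * (a⁻¹ • Xᵀ) * (1 - U₁ * U₁ᵀ) * X * V
      ≤ a⁻¹ • ((X * V)ᵀ * (1 : Matrix ι ι ℝ) * (X * V)) := by
        rw [projected_gram_eq]
        exact smul_le_smul_of_le (transpose_mul_mul_le_transpose_mul_mul
          (sub_le_self _ hU₁) _) (inv_nonneg.mpr ha)
    _ = Vᵀ * (a⁻¹ • Xᵀ * X) * V := by
        simp only [transpose_mul, Matrix.mul_one, Matrix.smul_mul, Matrix.mul_smul,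
          Matrix.mul_assoc]
    _ ≤ Vᵀ * (matOpNorm (a⁻¹ • Xᵀ * X) • 1) * V :=
        transpose_mul_mul_le_transpose_mul_mul (le_matOpNorm_smul_one hsym) V
    _ = matOpNorm (a⁻¹ • Xᵀ * X) • 1 := by
        rw [Matrix.mul_smul, Matrix.mul_one, Matrix.smul_mul, hV]
    _ ≤ L • 1 := smul_one_le_smul_one hL

end Matrix

/-- `(D A⁺ X*)(D A⁺ X*)ᵀ = (1/(nν))(D A⁺ Dᵀ − (D A⁺ Dᵀ)²)` and consequently
`(D A⁺ X*)(D A⁺ X*)ᵀ ⪯ (Λ_X²/(n λ_D²)) I`. -/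
theorem DAdagXstar_product_bound {n m p r r' : ℕ}
    (X : Matrix (Fin n) (Fin p) ℝ) (D : Matrix (Fin m) (Fin p) ℝ) (ν : ℝ) (hν : 0 < ν)
    (U : Matrix (Fin m) (Fin r) ℝ) (Λ : Matrix (Fin r) (Fin r) ℝ)
    (V : Matrix (Fin p) (Fin r) ℝ) (U₁ : Matrix (Fin n) (Fin r') ℝ)
    (hU : Uᵀ * U = 1) (hΛsym : Λᵀ = Λ) (hV : Vᵀ * V = 1) (hU₁ : U₁ᵀ * U₁ = 1)
    (Xstar : Matrix (Fin p) (Fin n) ℝ) (hXstar : Xstar = ((n : ℝ))⁻¹ • Xᵀ)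
    (lamD LamX : ℝ) (hlamD : 0 < lamD)
    (hΛlow : (Λ * Λ - (lamD ^ 2) • (1 : Matrix (Fin r) (Fin r) ℝ)).PosSemidef)
    (hXX : matOpNorm (Xstar * X) ≤ LamX ^ 2)
    (A : Matrix (Fin p) (Fin p) ℝ) (hA : A = ν • (Xstar * X) + Dᵀ * D)
    (Aplus : Matrix (Fin p) (Fin p) ℝ) (hAplus : IsMoorePenrose A Aplus)
    (hAplusSym : Aplusᵀ = Aplus)
    (B : Matrix (Fin r) (Fin r) ℝ)
    (hB : B = Λ * Λ + ν • (Vᵀ * Xstar * ((1 : Matrix (Fin n) (Fin n) ℝ) - U₁ * U₁ᵀ) * X * V))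
    (hDAD : D * Aplus * Dᵀ = U * Λ * B⁻¹ * Λ * Uᵀ) :
    (D * Aplus * Xstar) * (D * Aplus * Xstar)ᵀ =
      ((n : ℝ) * ν)⁻¹ • (D * Aplus * Dᵀ - (D * Aplus * Dᵀ) * (D * Aplus * Dᵀ)) ∧
    ((LamX ^ 2 / ((n : ℝ) * lamD ^ 2)) • (1 : Matrix (Fin m) (Fin m) ℝ) -
      (D * Aplus * Xstar) * (D * Aplus * Xstar)ᵀ).PosSemidef := by
  have hgram := mul_transpose_self_eq_smul_sub_mul_self hν.ne' hXstar hA hAplus.2.1 hAplusSym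
  refine ⟨hgram, ?_⟩
  subst hXstar
  have hM := projected_gram_nonneg (Nat.cast_nonneg n) X V hU₁
  have hMc := projected_gram_le (Nat.cast_nonneg n) hV U₁ hXX
  have hcore := sub_mul_self_le_smul_one hν.le (sq_nonneg LamX) hlamD hU hΛsym hΛlow hM hMc hB
  rw [hgram, hDAD, ← le_iff]
  calc ((n : ℝ) * ν)⁻¹ • (U * Λ * B⁻¹ * Λ * Uᵀ - U * Λ * B⁻¹ * Λ * Uᵀ * (U * Λ * B⁻¹ * Λ * Uᵀ))
      ≤ ((n : ℝ) * ν)⁻¹ • ((ν * LamX ^ 2 / lamD ^ 2) • 1) :=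
        smul_le_smul_of_le hcore (inv_nonneg.mpr (mul_nonneg (Nat.cast_nonneg n) hν.le))
    _ = (LamX ^ 2 / ((n : ℝ) * lamD ^ 2)) • 1 := by
        rw [smul_smul, mul_inv]
        field_simp
end

section
/- Let λ, λ_D, Λ_X > 0, and suppose βᵀX*Xβ ≥ λ‖β‖₂² for all β ∈ 𝓛 ∩ 𝓜, the smallest nonzero singular value of D_{S^c} is at least λ_D, and ‖X*X‖₂ ≤ Λ_X². Set ν₀ = 2λ_D²/(λ + 2Λ_X²). Then for every β ∈ 𝓛, βᵀ(ν₀ X*X + D_{S^c}ᵀD_{S^c})β ≥ (λν₀/2)‖β‖₂². -/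
open Matrix

/-!
Split `β ∈ 𝓛` orthogonally as `β = β' + β''` with `D_{Sᶜ} β' = 0` and `β'' = Dᵀ w` for some `w`
supported on `Sᶜ`. Then `β'` still lies in `𝓛` (because `β'' ⊥ ker D`), so restricted strong
convexity applies to it, while `D_{Sᶜ}` sees only `β''`, on which it is bounded below by `λ_D`.
The cross term `β''ᵀ X*X β''` is paid for with `‖X*X‖₂ ≤ Λ_X²`, and `ν₀` is exactly the weight
for which the coefficients of `‖β'‖²` and `‖β''‖²` both come out as `λν₀/2`.
-/

section NormalEquations

variable {ι κ R : Type*} [Fintype ι] [Fintype κ] [Field R] [LinearOrder R] [IsStrictOrderedRing R]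

theorem Matrix.range_mulVecLin_self_mul_transpose (A : Matrix ι κ R) :
    LinearMap.range (A * Aᵀ).mulVecLin = LinearMap.range A.mulVecLin := by
  refine Submodule.eq_of_le_of_finrank_eq ?_ (rank_self_mul_transpose A)
  rw [mulVecLin_mul]
  exact LinearMap.range_comp_le_range _ _

/-- Solvability of the normal equations `A Aᵀ w = A b`. -/
theorem Matrix.exists_mulVec_sub_transpose_mulVec_eq_zero (A : Matrix ι κ R) (b : κ → R) :
    ∃ w, A *ᵥ (b - Aᵀ *ᵥ w) = 0 := by
  have hb : A *ᵥ b ∈ LinearMap.range (A * Aᵀ).mulVecLin := by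
    rw [range_mulVecLin_self_mul_transpose]
    exact ⟨b, rfl⟩
  obtain ⟨w, hw⟩ := hb
  refine ⟨w, ?_⟩
  rw [mulVec_sub, mulVec_mulVec, ← hw, mulVecLin_apply, sub_self]

/-- The splitting `β = β' + Dᵀ w` along `𝓜 = ker D_{Sᶜ}` and `𝓜ᗮ = Im D_{Sᶜ}ᵀ`. -/
theorem Matrix.exists_orthogonal_split_ker_rows [DecidableEq ι] (D : Matrix ι κ R)
    (S : Finset ι) (β : κ → R) :
    ∃ w : ι → R, (∀ j ∈ S, w j = 0) ∧ ∀ j ∉ S, (D *ᵥ (β - Dᵀ *ᵥ w)) j = 0 := by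
  set P : Matrix ι ι R := diagonal fun j => if j ∈ S then 0 else 1
  obtain ⟨w, hw⟩ := (P * D).exists_mulVec_sub_transpose_mulVec_eq_zero β
  refine ⟨P *ᵥ w, fun j hj => by simp [P, mulVec_diagonal, hj], fun j hj => ?_⟩
  have hj' := congrFun hw j
  rwa [transpose_mul, diagonal_transpose, ← mulVec_mulVec, ← mulVec_mulVec, mulVec_diagonal,
    if_neg hj, one_mul] at hj'

end NormalEquations

section DotProduct

variable {ι κ R : Type*} [Fintype ι] [Fintype κ] [CommRing R]

theorem Matrix.dotProduct_self_le_two_mul_add [LinearOrder R] [IsStrictOrderedRing R]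
    (u v : ι → R) :
    u ⬝ᵥ u ≤ 2 * ((u + v) ⬝ᵥ (u + v)) + 2 * (v ⬝ᵥ v) := by
  simp only [dotProduct, Pi.add_apply, Finset.mul_sum, ← Finset.sum_add_distrib]
  exact Finset.sum_le_sum fun i _ => by nlinarith [sq_nonneg (u i + 2 * v i)]

theorem Matrix.dotProduct_transpose_mulVec_eq_zero {D : Matrix ι κ R} {S : Finset ι}
    {v : κ → R} {w : ι → R} (hv : ∀ j ∉ S, (D *ᵥ v) j = 0) (hw : ∀ j ∈ S, w j = 0) :
    v ⬝ᵥ (Dᵀ *ᵥ w) = 0 := by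
  rw [mulVec_transpose, dotProduct_comm, ← dotProduct_mulVec]
  refine Finset.sum_eq_zero fun j _ => ?_
  by_cases hj : j ∈ S
  · rw [hw j hj, zero_mul]
  · rw [hv j hj, mul_zero]

theorem Matrix.add_dotProduct_add_self_of_dotProduct_eq_zero {u v : κ → R} (h : u ⬝ᵥ v = 0) :
    (u + v) ⬝ᵥ (u + v) = u ⬝ᵥ u + v ⬝ᵥ v := by
  rw [add_dotProduct, dotProduct_add, dotProduct_add, dotProduct_comm v u, h]
  ring

end DotProduct

theorem rsc_extension_to_L_general {n m p : ℕ}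
    (X : Matrix (Fin n) (Fin p) ℝ) (D : Matrix (Fin m) (Fin p) ℝ)
    (S : Finset (Fin m)) (lam lamD LamX : ℝ)
    (hlam : 0 < lam)
    (hRSC : ∀ β : Fin p → ℝ,
      (∀ w : Fin p → ℝ, X.mulVec w = 0 → D.mulVec w = 0 → β ⬝ᵥ w = 0) →
      (∀ j ∉ S, D.mulVec β j = 0) →
      (X.mulVec β ⬝ᵥ X.mulVec β) / n ≥ lam * (β ⬝ᵥ β))
    (hlamD' : ∀ v : Fin p → ℝ,
      (∃ w : Fin m → ℝ, (∀ j ∈ S, w j = 0) ∧ v = Dᵀ.mulVec w) →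
      (∑ j ∈ Finset.univ.filter (fun j => j ∉ S), (D.mulVec v j) ^ 2) ≥ lamD ^ 2 * (v ⬝ᵥ v))
    (hXX : ∀ β : Fin p → ℝ, (X.mulVec β ⬝ᵥ X.mulVec β) / n ≤ LamX ^ 2 * (β ⬝ᵥ β))
    (ν₀ : ℝ) (hν₀ : ν₀ = 2 * lamD ^ 2 / (lam + 2 * LamX ^ 2)) :
    ∀ β : Fin p → ℝ,
      (∀ w : Fin p → ℝ, X.mulVec w = 0 → D.mulVec w = 0 → β ⬝ᵥ w = 0) →
      ν₀ * ((X.mulVec β ⬝ᵥ X.mulVec β) / n)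
          + (∑ j ∈ Finset.univ.filter (fun j => j ∉ S), (D.mulVec β j) ^ 2)
        ≥ (lam * ν₀ / 2) * (β ⬝ᵥ β) := by
  intro β hβ
  obtain ⟨w, hwS, hDβ'⟩ := D.exists_orthogonal_split_ker_rows S β
  set β'' := Dᵀ *ᵥ w with hβ''
  set β' := β - β''
  have hβ'L : ∀ u, X *ᵥ u = 0 → D *ᵥ u = 0 → β' ⬝ᵥ u = 0 := fun u hXu hDu => by
    rw [sub_dotProduct, hβ u hXu hDu, hβ'', mulVec_transpose, ← dotProduct_mulVec, hDu,
      dotProduct_zero, sub_zero]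
  have hnorm : β ⬝ᵥ β = β' ⬝ᵥ β' + β'' ⬝ᵥ β'' := by
    rw [← add_dotProduct_add_self_of_dotProduct_eq_zero
      (dotProduct_transpose_mulVec_eq_zero hDβ' hwS), sub_add_cancel]
  have hD : ∑ j ∈ Finset.univ.filter (fun j => j ∉ S), (D *ᵥ β) j ^ 2
      ≥ lamD ^ 2 * (β'' ⬝ᵥ β'') := by
    refine le_of_le_of_eq (hlamD' β'' ⟨w, hwS, rfl⟩) (Finset.sum_congr rfl fun j hj => ?_)
    rw [← sub_add_cancel β β'', mulVec_add, Pi.add_apply, hDβ' j (Finset.mem_filter.mp hj).2,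
      zero_add]
  have hX : (X *ᵥ β' ⬝ᵥ X *ᵥ β') / n
      ≤ 2 * ((X *ᵥ β ⬝ᵥ X *ᵥ β) / n) + 2 * ((X *ᵥ β'' ⬝ᵥ X *ᵥ β'') / n) := by
    rw [← mul_div_assoc, ← mul_div_assoc, ← add_div, ← sub_add_cancel β β'', mulVec_add]
    exact div_le_div_of_nonneg_right (dotProduct_self_le_two_mul_add _ _) n.cast_nonneg
  have hν₀_nonneg : 0 ≤ ν₀ := hν₀ ▸ by positivity
  have hν₀_balance : ν₀ * (lam + 2 * LamX ^ 2) = 2 * lamD ^ 2 := by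
    rw [hν₀]; field_simp
  rw [hnorm]
  nlinarith [mul_le_mul_of_nonneg_left hX hν₀_nonneg, congrArg (· * (β'' ⬝ᵥ β'')) hν₀_balance,
    mul_le_mul_of_nonneg_left (hRSC β' hβ'L hDβ') hν₀_nonneg,
    mul_le_mul_of_nonneg_left (hXX β'') hν₀_nonneg]

/-- If `X*X` is restricted strongly convex on `𝓛 ∩ 𝓜`, the smallest nonzero
singular value of `D_{S^c}` is at least `λ_D`, and `‖X*X‖₂ ≤ Λ_X²`, then with
`ν₀ = 2λ_D²/(λ + 2Λ_X²)`, for every `β ∈ 𝓛` one has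
`βᵀ(ν₀ X*X + D_{S^c}ᵀD_{S^c})β ≥ (λν₀/2)‖β‖₂²`. -/
theorem rsc_extension_to_L {n m p : ℕ}
    (X : Matrix (Fin n) (Fin p) ℝ) (D : Matrix (Fin m) (Fin p) ℝ)
    (S : Finset (Fin m)) (lam lamD LamX : ℝ)
    (hlam : 0 < lam) (hlamD : 0 < lamD) (hLamX : 0 < LamX)
    (hRSC : ∀ β : Fin p → ℝ,
      (∀ w : Fin p → ℝ, X.mulVec w = 0 → D.mulVec w = 0 → β ⬝ᵥ w = 0) →
      (∀ j ∉ S, D.mulVec β j = 0) →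
      (X.mulVec β ⬝ᵥ X.mulVec β) / n ≥ lam * (β ⬝ᵥ β))
    (hlamD' : ∀ v : Fin p → ℝ,
      (∃ w : Fin m → ℝ, (∀ j ∈ S, w j = 0) ∧ v = Dᵀ.mulVec w) →
      (∑ j ∈ Finset.univ.filter (fun j => j ∉ S), (D.mulVec v j) ^ 2) ≥ lamD ^ 2 * (v ⬝ᵥ v))
    (hXX : ∀ β : Fin p → ℝ, (X.mulVec β ⬝ᵥ X.mulVec β) / n ≤ LamX ^ 2 * (β ⬝ᵥ β))
    (ν₀ : ℝ) (hν₀ : ν₀ = 2 * lamD ^ 2 / (lam + 2 * LamX ^ 2)) :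
    ∀ β : Fin p → ℝ,
      (∀ w : Fin p → ℝ, X.mulVec w = 0 → D.mulVec w = 0 → β ⬝ᵥ w = 0) →
      ν₀ * ((X.mulVec β ⬝ᵥ X.mulVec β) / n)
          + (∑ j ∈ Finset.univ.filter (fun j => j ∉ S), (D.mulVec β j) ^ 2)
        ≥ (lam * ν₀ / 2) * (β ⬝ᵥ β) :=
  rsc_extension_to_L_general X D S lam lamD LamX hlam hRSC hlamD' hXX ν₀ hν₀
end

section
/- Let Ψ : [0,∞) → [0,∞) be right-differentiable and satisfy dΨ/dt ≤ −λ F^{-1}(Ψ(t)) where λ > 0, F(x) = x/(2κ) + G(x) for a nondecreasing continuous G with G(0) = 0, and F^{-1}(x) := inf{y ≥ 0 : F(y) ≥ x}. Suppose Ψ(0) ≤ F(d₀²) for some d₀ > 0 and Ψ(t) ≥ c > 0 for all t ∈ [0,T]. Then λT ≤ ∫_c^{F(d₀²)} dx / F^{-1}(x). -/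
/-- The integral comparison step of the generalized Bihari inequality: if `Ψ` is
right-differentiable with `dΨ/dt ≤ −λ F⁻¹(Ψ(t))`, `Ψ(0) ≤ F(d₀²)` and
`Ψ(t) ≥ c > 0` on `[0,T]`, then `λT ≤ ∫_c^{F(d₀²)} dx / F⁻¹(x)`. -/
theorem bihari_integral_comparison
    (Ψ Ψ' G : ℝ → ℝ) (κ lam c d₀ T : ℝ)
    (hκ : 0 < κ) (hlam : 0 < lam) (hc : 0 < c) (hd₀ : 0 < d₀) (hT : 0 ≤ T)
    (F : ℝ → ℝ) (hF : F = fun x => x / (2 * κ) + G x)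
    (hGmono : MonotoneOn G (Set.Ici 0)) (hGcont : ContinuousOn G (Set.Ici 0))
    (hG0 : G 0 = 0)
    (Finv : ℝ → ℝ) (hFinv : Finv = fun x => sInf {y : ℝ | 0 ≤ y ∧ x ≤ F y})
    (hΨnonneg : ∀ t, 0 ≤ t → 0 ≤ Ψ t)
    (hΨcont : ContinuousOn Ψ (Set.Ici 0))
    (hderiv : ∀ t, 0 ≤ t → HasDerivWithinAt Ψ (Ψ' t) (Set.Ici t) t)
    (hineq : ∀ t, 0 ≤ t → Ψ' t ≤ -lam * Finv (Ψ t))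
    (hΨ0 : Ψ 0 ≤ F (d₀ ^ 2))
    (hΨc : ∀ t, t ∈ Set.Icc 0 T → c ≤ Ψ t) :
    lam * T ≤ ∫ x in c..(F (d₀ ^ 2)), (Finv x)⁻¹ := by
  have h2κ : (0:ℝ) < 2 * κ := by positivity
  have hGnn : ∀ y, 0 ≤ y → 0 ≤ G y := fun y hy => by
    have := hGmono Set.self_mem_Ici hy hy
    rwa [hG0] at this
  have hF0 : F 0 = 0 := by simp [hF, hG0]
  have hFmono : StrictMonoOn F (Set.Ici 0) := by
    intro a ha b hb hab
    simp only [hF]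
    have h1 : a / (2 * κ) < b / (2 * κ) := by gcongr
    exact add_lt_add_of_lt_of_le h1 (hGmono ha hb hab.le)
  have hFcont : ContinuousOn F (Set.Ici 0) := by
    rw [hF]
    exact (continuousOn_id.div_const _).add hGcont
  have hFsurj : ∀ x, 0 ≤ x → ∃ y, 0 ≤ y ∧ F y = x := by
    intro x hx
    have hb : (0:ℝ) ≤ 2 * κ * x := by positivity
    have hFb : x ≤ F (2 * κ * x) := by
      have h1 := hGnn _ hb
      rw [hF]
      simp only
      have h4 : 2 * κ * x / (2 * κ) = x := by field_simp
      rw [h4]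
      linarith
    have : x ∈ Set.Icc (F 0) (F (2 * κ * x)) := ⟨by rw [hF0]; exact hx, hFb⟩
    obtain ⟨y, hy, hFy⟩ := intermediate_value_Icc hb
      (hFcont.mono (fun z hz => hz.1)) this
    exact ⟨y, hy.1, hFy⟩
  have hFinvF : ∀ y, 0 ≤ y → Finv (F y) = y := by
    intro y hy
    simp only [hFinv]
    apply le_antisymm
    · refine csInf_le ?_ (⟨hy, le_rfl⟩ : y ∈ {z : ℝ | 0 ≤ z ∧ F y ≤ F z})
      exact ⟨0, fun z hz => hz.1⟩
    · apply le_csInf ⟨y, (⟨hy, le_rfl⟩ : y ∈ {z : ℝ | 0 ≤ z ∧ F y ≤ F z})⟩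
      intro z hz
      by_contra h
      push_neg at h
      exact absurd hz.2 (not_le.2 (hFmono hz.1 hy h))
  have hkey : ∀ x, 0 ≤ x → 0 ≤ Finv x ∧ F (Finv x) = x := by
    intro x hx
    obtain ⟨y, hy, rfl⟩ := hFsurj x hx
    rw [hFinvF y hy]
    exact ⟨hy, rfl⟩
  have hFinv_pos : ∀ x, 0 < x → 0 < Finv x := by
    intro x hx
    rcases (hkey x hx.le).1.lt_or_eq with h | h
    · exact h
    · exfalso
      have h2 := (hkey x hx.le).2
      rw [← h, hF0] at h2
      linarith
  have hFpos : ∀ y, 0 < y → 0 < F y := by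
    intro y hy
    have := hFmono Set.self_mem_Ici hy.le hy
    rwa [hF0] at this
  have hFinv_mono : MonotoneOn Finv (Set.Ioi 0) := by
    intro x hx x' hx' hxx'
    by_contra h
    push_neg at h
    have h1 := hFmono (hkey x' (le_of_lt hx')).1 (hkey x (le_of_lt hx)).1 h
    rw [(hkey x (le_of_lt hx)).2, (hkey x' (le_of_lt hx')).2] at h1
    exact absurd hxx' (not_le.2 h1)
  have hFinv_cont : ∀ a, 0 < a → ContinuousAt Finv a := by
    intro a ha
    apply continuousAt_of_monotoneOn_of_image_mem_nhds hFinv_mono (Ioi_mem_nhds ha)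
    apply Filter.mem_of_superset (Ioi_mem_nhds (hFinv_pos a ha))
    intro y hy
    exact ⟨F y, hFpos y hy, hFinvF y (le_of_lt hy)⟩
  set g : ℝ → ℝ := fun x => (Finv x)⁻¹ with hg
  have hg_cont : ∀ a, 0 < a → ContinuousAt g a := fun a ha =>
    (hFinv_cont a ha).inv₀ (hFinv_pos a ha).ne'
  have hg_nonneg : ∀ x, 0 ≤ x → 0 ≤ g x := fun x hx =>
    inv_nonneg.2 (hkey x hx).1
  have hgInt : ∀ u v, 0 < u → 0 < v → IntervalIntegrable g MeasureTheory.volume u v := by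
    intro u v hu hv
    apply ContinuousOn.intervalIntegrable
    intro x hx
    have hx0 : 0 < x := lt_of_lt_of_le (lt_min hu hv) hx.1
    exact (hg_cont x hx0).continuousWithinAt
  set H : ℝ → ℝ := fun u => ∫ x in c..u, g x with hH
  have hH_deriv : ∀ u, 0 < u → HasDerivAt H (g u) u := by
    intro u hu
    exact intervalIntegral.integral_hasDerivAt_right (hgInt c u hc hu)
      (ContinuousAt.stronglyMeasurableAtFilter isOpen_Ioi
        (fun x hx => hg_cont x hx) u hu)
      (hg_cont u hu)
  -- positivity of Ψ on [0,T]
  have hΨpos : ∀ t, t ∈ Set.Icc 0 T → 0 < Ψ t := fun t ht => lt_of_lt_of_le hc (hΨc t ht)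
  -- apply the fencing theorem
  have main : ∀ ⦃x⦄, x ∈ Set.Icc 0 T → lam * x + H (Ψ x) ≤ H (Ψ 0) := by
    apply image_le_of_deriv_right_le_deriv_boundary
      (f' := fun t => lam + g (Ψ t) * Ψ' t) (B := fun _ => H (Ψ 0)) (B' := fun _ => 0)
    · -- continuity of f on Icc 0 T
      apply ContinuousOn.add
      · exact (continuous_const.mul continuous_id).continuousOn
      · intro t ht
        exact ((hH_deriv (Ψ t) (hΨpos t ht)).continuousAt).comp_continuousWithinAt
          ((hΨcont t ht.1).mono (fun z hz => hz.1))
    · -- right derivative on Ico 0 T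
      intro x hx
      have hx0 : (0:ℝ) ≤ x := hx.1
      have hΨx : 0 < Ψ x := hΨpos x ⟨hx.1, hx.2.le⟩
      have h1 : HasDerivWithinAt (fun t => lam * t) lam (Set.Ici x) x := by
        simpa using ((hasDerivAt_id x).const_mul lam).hasDerivWithinAt
      have h2 : HasDerivWithinAt (fun t => H (Ψ t)) (g (Ψ x) * Ψ' x) (Set.Ici x) x :=
        (hH_deriv (Ψ x) hΨx).comp_hasDerivWithinAt x (hderiv x hx0)
      exact h1.add h2
    · simp
    · exact continuousOn_const
    · exact fun x _ => hasDerivWithinAt_const x _ _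
    · -- bound : f' ≤ 0
      intro x hx
      have hx0 : (0:ℝ) ≤ x := hx.1
      have hΨx : 0 < Ψ x := hΨpos x ⟨hx.1, hx.2.le⟩
      have hFi : 0 < Finv (Ψ x) := hFinv_pos _ hΨx
      have h1 : Ψ' x ≤ -lam * Finv (Ψ x) := hineq x hx0
      have h2 : g (Ψ x) * Ψ' x ≤ g (Ψ x) * (-lam * Finv (Ψ x)) :=
        mul_le_mul_of_nonneg_left h1 (hg_nonneg _ hΨx.le)
      have h3 : g (Ψ x) * (-lam * Finv (Ψ x)) = -lam := by
        simp only [hg]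
        rw [mul_comm (-lam) (Finv (Ψ x)), ← mul_assoc, inv_mul_cancel₀ hFi.ne', one_mul]
      rw [h3] at h2
      linarith
  have hmainT : lam * T + H (Ψ T) ≤ H (Ψ 0) := main ⟨hT, le_rfl⟩
  have hc0 : c ≤ Ψ 0 := hΨc 0 ⟨le_rfl, hT⟩
  have hcT : c ≤ Ψ T := hΨc T ⟨hT, le_rfl⟩
  have hHT_nonneg : 0 ≤ H (Ψ T) := by
    apply intervalIntegral.integral_nonneg hcT
    intro x hx
    exact hg_nonneg x (le_trans hc.le hx.1)
  have hFd : 0 < F (d₀ ^ 2) := hFpos _ (by positivity)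
  have hH0_le : H (Ψ 0) ≤ ∫ x in c..(F (d₀ ^ 2)), g x := by
    apply intervalIntegral.integral_mono_interval le_rfl hc0 hΨ0
    · filter_upwards [MeasureTheory.ae_restrict_mem measurableSet_Ioc] with x hx
      exact hg_nonneg x (le_trans hc.le hx.1.le)
    · exact hgInt c _ hc hFd
  calc lam * T ≤ lam * T + H (Ψ T) := by linarith
    _ ≤ H (Ψ 0) := hmainT
    _ ≤ ∫ x in c..(F (d₀ ^ 2)), g x := hH0_le
end
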